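/- arXiv:2208.04901 — 7 statements merged into one kernel-verified Lean document; each statement's English description precedes it below -/
import Mathlib

section
/- A commutative unital ring R is Hermite if and only if every left-invertible n×k matrix over R (with k < n) can be completed to an invertible n×n matrix over R, i.e., if A is an n×k matrix with BA = I_k for some k×n matrix B, then there exists an n×(n−k) matrix C such that the n×n matrix [A | C] is invertible. -/
open Matrix in
private lemma key_mulVec {R : Type} [CommRing R] {n k : ℕ} (h : n = k + (n - k))
    (A : Matrix (Fin n) (Fin k) R) (C : Matrix (Fin n) (Fin (n - k)) R)
    (p : Fin k → R) (q : Fin (n - k) → R) :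
    ((Matrix.fromCols A C).submatrix id
        (fun j : Fin n => finSumFinEquiv.symm (Fin.cast h j))) *ᵥ
      (Sum.elim p q ∘ ((finCongr h).trans finSumFinEquiv.symm)) = A *ᵥ p + C *ᵥ q := by
  have hfun : (fun j : Fin n => finSumFinEquiv.symm (Fin.cast h j))
      = ⇑((finCongr h).trans finSumFinEquiv.symm) := by
    funext j; simp
  rw [hfun, Matrix.submatrix_mulVec_equiv]
  have h2 : (Sum.elim p q ∘ ⇑((finCongr h).trans finSumFinEquiv.symm))
      ∘ ⇑((finCongr h).trans finSumFinEquiv.symm).symm = Sum.elim p q := by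
    funext j; simp
  rw [h2, Function.comp_id]
  simp

/-- The reindexing equivalence `R^k × R^(n-k) ≃ R^n`. -/
private def tau (R : Type) [CommRing R] {n k : ℕ} (h : n = k + (n - k)) :
    ((Fin k → R) × (Fin (n - k) → R)) ≃ (Fin n → R) where
  toFun x := Sum.elim x.1 x.2 ∘ ((finCongr h).trans finSumFinEquiv.symm)
  invFun v := (v ∘ ((finCongr h).trans finSumFinEquiv.symm).symm ∘ Sum.inl,
               v ∘ ((finCongr h).trans finSumFinEquiv.symm).symm ∘ Sum.inr)
  left_inv x := by ext a <;> simp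
  right_inv v := by
    funext j
    rcases hs : ((finCongr h).trans finSumFinEquiv.symm) j with a | a <;>
      simp only [Function.comp_apply, hs, Sum.elim_inl, Sum.elim_inr] <;>
      rw [← hs, Equiv.symm_apply_apply]

/-- A module is stably free if adding a finite free module to it yields a
finite free module. -/
def IsStablyFree (R : Type*) [CommRing R] (M : Type*) [AddCommGroup M] [Module R M] : Prop :=
  ∃ k n : ℕ, Nonempty ((M × (Fin k → R)) ≃ₗ[R] (Fin n → R))

/-- A commutative unital ring is Hermite if every finitely generated stably
free module over it is free. -/
def IsHermite (R : Type*) [CommRing R] : Prop :=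
  ∀ (M : Type) [AddCommGroup M] [Module R M],
    Module.Finite R M → IsStablyFree R M → Module.Free R M

open Matrix in
theorem stmt2 (R : Type) [CommRing R] :
    IsHermite R ↔
      ∀ (n k : ℕ) (hk : k < n) (A : Matrix (Fin n) (Fin k) R),
        (∃ B : Matrix (Fin k) (Fin n) R, B * A = 1) →
        ∃ C : Matrix (Fin n) (Fin (n - k)) R,
          IsUnit ((Matrix.fromCols A C).submatrix id
            (fun j : Fin n => finSumFinEquiv.symm (Fin.cast (by omega : n = k + (n - k)) j))) := by
  constructor
  · intro hH n k hk A hB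
    obtain ⟨B, hBA⟩ := hB
    rcases subsingleton_or_nontrivial R with hR | hR
    · haveI := hR
      haveI : Subsingleton (Matrix (Fin n) (Fin n) R) :=
        ⟨fun a b => by ext i j; exact Subsingleton.elim _ _⟩
      refine ⟨0, ?_⟩
      rw [Subsingleton.elim ((Matrix.fromCols A 0).submatrix id
        (fun j : Fin n => finSumFinEquiv.symm (Fin.cast (by omega : n = k + (n - k)) j)))
        (1 : Matrix (Fin n) (Fin n) R)]
      exact isUnit_one
    haveI := hR
    set f := Matrix.toLin' A with hf
    set g := Matrix.toLin' B with hg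
    have hgf : ∀ y, g (f y) = y := by
      intro y
      rw [hf, hg, ← Matrix.toLin'_mul_apply, hBA, Matrix.toLin'_one, LinearMap.id_apply]
    set N := LinearMap.ker g with hN
    have hmemN : ∀ x : Fin n → R, x ∈ N ↔ g x = 0 := fun x => LinearMap.mem_ker
    let π : (Fin n → R) →ₗ[R] N := (LinearMap.id - f ∘ₗ g).codRestrict N (by
      intro x
      rw [hmemN]
      simp [hgf])
    have hπ : ∀ x, (π x : Fin n → R) = x - f (g x) := fun x => rfl
    let φ : (N × (Fin k → R)) →ₗ[R] (Fin n → R) := LinearMap.coprod N.subtype f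
    let ψ : (Fin n → R) →ₗ[R] (N × (Fin k → R)) := LinearMap.prod π g
    have hm0 : ∀ m : N, g (↑m) = 0 := fun m => m.2
    have h1 : φ ∘ₗ ψ = LinearMap.id := by
      refine LinearMap.ext fun x => ?_
      show (π x : Fin n → R) + f (g x) = x
      rw [hπ]; abel
    have h2 : ψ ∘ₗ φ = LinearMap.id := by
      refine LinearMap.ext fun my => ?_
      obtain ⟨m, y⟩ := my
      have hg2 : g (↑m + f y) = y := by rw [map_add, hm0, hgf, zero_add]
      refine Prod.ext (Subtype.ext ?_) ?_
      · show ((π (↑m + f y) : N) : Fin n → R) = ↑m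
        rw [hπ, hg2]
        abel
      · show g (↑m + f y) = y
        exact hg2
    let e : (N × (Fin k → R)) ≃ₗ[R] (Fin n → R) := LinearEquiv.ofLinear φ ψ h1 h2
    have hπs : Function.Surjective π := by
      intro m
      refine ⟨↑m, Subtype.ext ?_⟩
      rw [hπ, hm0 m, map_zero, sub_zero]
    haveI : Module.Finite R N := Module.Finite.of_surjective π hπs
    haveI : Module.Free R N := hH N inferInstance ⟨k, n, ⟨e⟩⟩
    have hrank : Module.finrank R N = n - k := by
      have h3 := e.finrank_eq
      rw [Module.finrank_prod, Module.finrank_fin_fun, Module.finrank_fin_fun] at h3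
      omega
    let b : Module.Basis (Fin (n - k)) R N := Module.finBasisOfFinrankEq R N hrank
    let c : (Fin (n - k) → R) →ₗ[R] (Fin n → R) := N.subtype ∘ₗ (b.equivFun.symm : _)
    refine ⟨LinearMap.toMatrix' c, ?_⟩
    have h' : n = k + (n - k) := by omega
    let τ := tau R (n := n) (k := k) h'
    let ρ : ((Fin k → R) × (Fin (n - k) → R)) ≃ₗ[R] (N × (Fin k → R)) :=
      (LinearEquiv.prodComm R _ _).trans (b.equivFun.symm.prodCongr (LinearEquiv.refl R _))
    have hkey : ∀ x : (Fin k → R) × (Fin (n - k) → R),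
        Matrix.toLinAlgEquiv'
          ((Matrix.fromCols A (LinearMap.toMatrix' c)).submatrix id
            (fun j : Fin n => finSumFinEquiv.symm (Fin.cast h' j))) (τ x) = e (ρ x) := by
      rintro ⟨p, q⟩
      show ((Matrix.fromCols A (LinearMap.toMatrix' c)).submatrix id
            (fun j : Fin n => finSumFinEquiv.symm (Fin.cast h' j))) *ᵥ
          (Sum.elim p q ∘ ((finCongr h').trans finSumFinEquiv.symm)) = e (ρ (p, q))
      rw [key_mulVec h']
      have hrρ : ρ (p, q) = (b.equivFun.symm q, p) := rfl
      have hre : e (b.equivFun.symm q, p) = ↑(b.equivFun.symm q) + f p := by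
        show φ (b.equivFun.symm q, p) = _
        rfl
      rw [hrρ, hre]
      have hcq : (LinearMap.toMatrix' c) *ᵥ q = ↑(b.equivFun.symm q) := by
        rw [← Matrix.toLin'_apply, Matrix.toLin'_toMatrix']
        rfl
      rw [hcq, hf, Matrix.toLin'_apply]
      abel
    have hbij : Function.Bijective ⇑(Matrix.toLinAlgEquiv'
          ((Matrix.fromCols A (LinearMap.toMatrix' c)).submatrix id
            (fun j : Fin n => finSumFinEquiv.symm (Fin.cast h' j)))) := by
      have funeq : ⇑(Matrix.toLinAlgEquiv'
          ((Matrix.fromCols A (LinearMap.toMatrix' c)).submatrix id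
            (fun j : Fin n => finSumFinEquiv.symm (Fin.cast h' j)))) = ⇑e ∘ ⇑ρ ∘ ⇑τ.symm := by
        funext v
        have h4 := hkey (τ.symm v)
        rwa [Equiv.apply_symm_apply] at h4
      rw [funeq]
      exact e.bijective.comp (ρ.bijective.comp τ.symm.bijective)
    have hunit : IsUnit (Matrix.toLinAlgEquiv'
          ((Matrix.fromCols A (LinearMap.toMatrix' c)).submatrix id
            (fun j : Fin n => finSumFinEquiv.symm (Fin.cast h' j)))) :=
      (Module.End.isUnit_iff _).mpr hbij
    have h5 := hunit.map (LinearMap.toMatrixAlgEquiv' (n := Fin n) (R := R))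
    simpa using h5
  · intro H M _ _ hfin hsf
    obtain ⟨k, n, ⟨e⟩⟩ := hsf
    rcases subsingleton_or_nontrivial R with hR | hR
    · haveI := hR
      exact Module.Free.of_subsingleton' R M
    haveI := hR
    let f : (Fin k → R) →ₗ[R] (Fin n → R) := e.toLinearMap ∘ₗ LinearMap.inr R M (Fin k → R)
    let g : (Fin n → R) →ₗ[R] (Fin k → R) := LinearMap.snd R M (Fin k → R) ∘ₗ e.symm.toLinearMap
    have hgf : ∀ y, g (f y) = y := by intro y; simp [f, g]
    have hfi : Function.Injective f := by
      intro a b hab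
      have h5 := congrArg g hab
      rwa [hgf, hgf] at h5
    have hkn : k ≤ n := le_of_fin_injective R f hfi
    rcases eq_or_lt_of_le hkn with heq | hlt
    · subst heq
      have hgs : Function.Surjective g := fun y => ⟨f y, hgf y⟩
      have hgi : Function.Injective g :=
        OrzechProperty.injective_of_surjective_endomorphism g hgs
      haveI : Subsingleton M := by
        constructor
        intro a b
        have h5 : g (e (a, 0)) = g (e (b, 0)) := by simp [g]
        have h6 := e.injective (hgi h5)
        exact (Prod.ext_iff.mp h6).1
      infer_instance
    have hid : g ∘ₗ f = LinearMap.id := LinearMap.ext hgf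
    obtain ⟨C, hC⟩ := H n k hlt (LinearMap.toMatrix' f)
      ⟨LinearMap.toMatrix' g, by rw [← LinearMap.toMatrix'_comp, hid, LinearMap.toMatrix'_id]⟩
    have h' : n = k + (n - k) := by omega
    let τ := tau R (n := n) (k := k) h'
    have hbij : Function.Bijective ⇑(Matrix.toLinAlgEquiv'
        ((Matrix.fromCols (LinearMap.toMatrix' f) C).submatrix id
          (fun j : Fin n => finSumFinEquiv.symm (Fin.cast h' j)))) :=
      (Module.End.isUnit_iff _).mp (hC.map (Matrix.toLinAlgEquiv' (n := Fin n) (R := R)))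
    let Φ : ((Fin k → R) × (Fin (n - k) → R)) →ₗ[R] (Fin n → R) :=
      LinearMap.coprod f (Matrix.toLin' C)
    have hΦeq : ⇑Φ = ⇑(Matrix.toLinAlgEquiv'
        ((Matrix.fromCols (LinearMap.toMatrix' f) C).submatrix id
          (fun j : Fin n => finSumFinEquiv.symm (Fin.cast h' j)))) ∘ ⇑τ := by
      funext x
      obtain ⟨p, q⟩ := x
      symm
      show ((Matrix.fromCols (LinearMap.toMatrix' f) C).submatrix id
          (fun j : Fin n => finSumFinEquiv.symm (Fin.cast h' j))) *ᵥ
          (Sum.elim p q ∘ ((finCongr h').trans finSumFinEquiv.symm)) = f p + Matrix.toLin' C q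
      rw [key_mulVec h', ← Matrix.toLin'_apply (LinearMap.toMatrix' f), Matrix.toLin'_toMatrix',
        Matrix.toLin'_apply]
    have hΦbij : Function.Bijective ⇑Φ := by
      rw [hΦeq]
      exact hbij.comp τ.bijective
    let Φe : ((Fin k → R) × (Fin (n - k) → R)) ≃ₗ[R] (Fin n → R) :=
      LinearEquiv.ofBijective Φ hΦbij
    let E : ((Fin k → R) × (Fin (n - k) → R)) ≃ₗ[R] (M × (Fin k → R)) := Φe.trans e.symm
    have hE : ∀ p : Fin k → R, E (p, 0) = ((0 : M), p) := by
      intro p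
      show e.symm (Φ (p, 0)) = (0, p)
      have h5 : Φ (p, 0) = e (0, p) := by
        show f p + Matrix.toLin' C 0 = e (0, p)
        rw [map_zero, add_zero]
        rfl
      rw [h5, e.symm_apply_apply]
    have hE' : ∀ p : Fin k → R, E.symm ((0 : M), p) = (p, 0) := fun p => by
      rw [← hE p, E.symm_apply_apply]
    let α : (Fin (n - k) → R) →ₗ[R] M :=
      (LinearMap.fst R M (Fin k → R)) ∘ₗ E.toLinearMap ∘ₗ
        (LinearMap.inr R (Fin k → R) (Fin (n - k) → R))
    let β : M →ₗ[R] (Fin (n - k) → R) :=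
      (LinearMap.snd R (Fin k → R) (Fin (n - k) → R)) ∘ₗ E.symm.toLinearMap ∘ₗ
        (LinearMap.inl R M (Fin k → R))
    have hβα : ∀ q, β (α q) = q := by
      intro q
      show (E.symm ((E (0, q)).1, 0)).2 = q
      have h5 : ((E (0, q)).1, (0 : Fin k → R)) = E (0, q) - ((0 : M), (E (0, q)).2) := by
        ext <;> simp
      rw [h5, map_sub, E.symm_apply_apply, hE' ((E (0, q)).2)]
      simp
    have hαβ : ∀ m, α (β m) = m := by
      intro m
      show (E ((0 : Fin k → R), (E.symm (m, 0)).2)).1 = m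
      have h5 : ((0 : Fin k → R), (E.symm (m, 0)).2)
          = E.symm (m, 0) - ((E.symm (m, 0)).1, (0 : Fin (n - k) → R)) := by
        ext <;> simp
      rw [h5, map_sub, E.apply_symm_apply, hE ((E.symm (m, 0)).1)]
      simp
    exact Module.Free.of_equiv (LinearEquiv.ofLinear α β
      (LinearMap.ext hαβ) (LinearMap.ext hβα))
end

section
/- If R is a projective free commutative unital ring, then the formal power series ring R⟦x⟧ is projective free. -/
open scoped TensorProduct


/-- A commutative unital ring is projective free if every finitely generated
projective module over it is free. -/
def IsProjectiveFree (R : Type*) [CommRing R] : Prop :=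
  ∀ (M : Type) [AddCommGroup M] [Module R M],
    Module.Finite R M → Module.Projective R M → Module.Free R M

attribute [local instance] RingHomInvPair.of_ringEquiv in
lemma IsProjectiveFree.of_ringEquiv {A B : Type} [CommRing A] [CommRing B]
    (e : A ≃+* B) (h : IsProjectiveFree A) : IsProjectiveFree B := by
  intro M _ _ hfin hproj
  letI instA : Module A M := Module.compHom M (e : A →+* B)
  let e₂ : M ≃ₛₗ[RingHomClass.toRingHom e] M :=
    { toFun := id, invFun := id, left_inv := fun _ => rfl, right_inv := fun _ => rfl,
      map_add' := fun _ _ => rfl, map_smul' := fun _ _ => rfl }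
  haveI : Module.Projective A M := Module.Projective.of_equiv e₂.symm
  haveI : Module.Finite A M := by
    obtain ⟨s, hs⟩ := hfin
    rw [Module.finite_def, Submodule.fg_def]
    refine ⟨s, s.finite_toSet, top_le_iff.mp fun x hx0 => ?_⟩
    have hx : x ∈ Submodule.span B (s : Set M) := hs ▸ Submodule.mem_top
    clear hx0
    induction hx using Submodule.span_induction with
    | mem y hy => exact Submodule.subset_span hy
    | zero => exact zero_mem _
    | add _ _ _ _ h1 h2 => exact add_mem h1 h2
    | smul b y _ hy =>
      obtain ⟨a, rfl⟩ := e.surjective b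
      exact Submodule.smul_mem _ a hy
  haveI : Module.Free A M := h M ‹_› ‹_›
  exact Module.Free.of_equiv e₂

set_option maxHeartbeats 1000000 in
theorem stmt3 (R : Type) [CommRing R] (h : IsProjectiveFree R) :
    IsProjectiveFree (PowerSeries R) := by
  intro M _ _ hfin hproj
  classical
  set S := PowerSeries R
  set I : Ideal S := RingHom.ker (PowerSeries.constantCoeff (R := R)) with hIdef
  -- `I` is contained in the Jacobson radical
  have hIjac : I ≤ Ideal.jacobson ⊥ := by
    intro f hf
    rw [Ideal.mem_jacobson_bot]
    intro y
    rw [PowerSeries.isUnit_iff_constantCoeff]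
    have hf0 : PowerSeries.constantCoeff (R := R) f = 0 := hf
    simp [hf0]
  let A := S ⧸ I
  have hA : IsProjectiveFree A :=
    IsProjectiveFree.of_ringEquiv
      (RingHom.quotientKerEquivOfSurjective
        (f := PowerSeries.constantCoeff (R := R)) PowerSeries.constantCoeff_surj).symm h
  -- quotient module
  let M' := M ⧸ (I • ⊤ : Submodule S M)
  have halg : Function.Surjective (algebraMap S A) := by
    rw [Ideal.Quotient.algebraMap_eq]
    exact Ideal.Quotient.mk_surjective
  haveI : IsScalarTower S A M' :=
    Module.IsTorsionBySet.isScalarTower (Module.isTorsionBySet_quotient_ideal_smul M I)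
  let eA : (A ⊗[S] M) ≃ₗ[A] M' :=
    (TensorProduct.quotTensorEquivQuotSMul M I).extendScalarsOfSurjective halg
  haveI : Module.Finite A M' := Module.Finite.equiv eA
  haveI : Module.Projective A M' := Module.Projective.of_equiv eA
  haveI : Module.Free A M' := hA M' ‹_› ‹_›
  -- pick a finite basis of `M'` and lift it
  let ι := Module.Free.ChooseBasisIndex A M'
  let b : Module.Basis ι A M' := Module.Free.chooseBasis A M'
  have hmk : Function.Surjective
      (Submodule.Quotient.mk (p := (I • ⊤ : Submodule S M))) :=
    Submodule.Quotient.mk_surjective _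
  choose m hm using fun j => hmk (b j)
  set N : Submodule S M := Submodule.span S (Set.range m) with hNdef
  have hNtop : (⊤ : Submodule S M) ≤ N ⊔ I • ⊤ := by
    intro x _
    choose c hc using fun j =>
      Ideal.Quotient.mk_surjective (I := I) (b.repr ((I • ⊤ : Submodule S M).mkQ x) j)
    have key : (I • ⊤ : Submodule S M).mkQ (∑ j, c j • m j)
        = (I • ⊤ : Submodule S M).mkQ x := by
      rw [map_sum]
      have e1 : ∀ j, (I • ⊤ : Submodule S M).mkQ (c j • m j)
          = b.repr ((I • ⊤ : Submodule S M).mkQ x) j • b j := by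
        intro j
        have : (I • ⊤ : Submodule S M).mkQ (c j • m j)
            = Ideal.Quotient.mk I (c j) • (I • ⊤ : Submodule S M).mkQ (m j) := rfl
        rw [this, hc j]
        exact congrArg (b.repr ((I • ⊤ : Submodule S M).mkQ x) j • ·) (hm j)
      simp only [e1]
      exact b.sum_repr _
    have hmem : x - ∑ j, c j • m j ∈ (I • ⊤ : Submodule S M) := by
      have h0 : (I • ⊤ : Submodule S M).mkQ (x - ∑ j, c j • m j) = 0 := by
        rw [map_sub, key, sub_self]
      rwa [Submodule.mkQ_apply, Submodule.Quotient.mk_eq_zero] at h0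
    refine Submodule.mem_sup.mpr ⟨∑ j, c j • m j, ?_, x - ∑ j, c j • m j, hmem, by abel⟩
    exact Submodule.sum_mem _ fun j _ =>
      Submodule.smul_mem _ _ (Submodule.subset_span ⟨j, rfl⟩)
  have hN : N = ⊤ :=
    top_le_iff.mp (Submodule.le_of_le_smul_of_le_jacobson_bot
      (Module.Finite.fg_top (R := S) (M := M)) hIjac hNtop)
  -- the linear map from the free module
  let F : (ι → S) →ₗ[S] M := Fintype.linearCombination S m
  have hFsurj : Function.Surjective F := by
    rw [← LinearMap.range_eq_top, Fintype.range_linearCombination, ← hNdef, hN]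
  obtain ⟨σ, hσ⟩ := Module.projective_lifting_property F LinearMap.id hFsurj
  have hσ' : ∀ y, F (σ y) = y := fun y => congr($hσ y)
  set π : (ι → S) →ₗ[S] (ι → S) := LinearMap.id - σ ∘ₗ F with hπdef
  have hπker : ∀ x ∈ LinearMap.ker F, π x = x := by
    intro x hx
    simp [hπdef, LinearMap.mem_ker.mp hx]
  have hKrange : LinearMap.ker F = LinearMap.range π := by
    apply le_antisymm
    · intro x hx
      exact ⟨x, hπker x hx⟩
    · rintro _ ⟨x, rfl⟩
      simp [hπdef, hσ']
  have hKfg : (LinearMap.ker F).FG := by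
    rw [hKrange, ← Submodule.map_top]
    exact Submodule.FG.map _ (Module.Finite.fg_top (R := S) (M := ι → S))
  -- kernel lies in I • ⊤
  have hKI : LinearMap.ker F ≤ I • (⊤ : Submodule S (ι → S)) := by
    intro x hx
    have hFx : (∑ j, x j • m j) = 0 := LinearMap.mem_ker.mp hx
    have hz : (∑ j, Ideal.Quotient.mk I (x j) • b j) = 0 := by
      have h0 := congrArg ((I • ⊤ : Submodule S M).mkQ) hFx
      rw [map_sum] at h0
      have heq : ∀ j, (I • ⊤ : Submodule S M).mkQ (x j • m j)
          = Ideal.Quotient.mk I (x j) • b j := by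
        intro j
        have : (I • ⊤ : Submodule S M).mkQ (x j • m j)
            = Ideal.Quotient.mk I (x j) • (I • ⊤ : Submodule S M).mkQ (m j) := rfl
        rw [this]
        exact congrArg (Ideal.Quotient.mk I (x j) • ·) (hm j)
      simp only [heq] at h0
      simpa using h0
    have hcoef : ∀ j, Ideal.Quotient.mk I (x j) = 0 :=
      Fintype.linearIndependent_iff.mp b.linearIndependent _ hz
    have hxI : ∀ j, x j ∈ I := fun j => Ideal.Quotient.eq_zero_iff_mem.mp (hcoef j)
    have hxe : x = ∑ j, x j • fun k => if j = k then (1 : S) else 0 := pi_eq_sum_univ x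
    rw [hxe]
    exact Submodule.sum_mem _ fun j _ => Submodule.smul_mem_smul (hxI j) Submodule.mem_top
  have hKIK : LinearMap.ker F ≤ I • LinearMap.ker F := by
    intro x hx
    have h1 : π x ∈ Submodule.map π (I • (⊤ : Submodule S (ι → S))) :=
      Submodule.mem_map_of_mem (hKI hx)
    rw [Submodule.map_smul''] at h1
    rw [hπker x hx] at h1
    have h2 : I • Submodule.map π ⊤ = I • LinearMap.ker F := by
      rw [Submodule.map_top, ← hKrange]
    rwa [h2] at h1
  have hKbot : LinearMap.ker F = ⊥ :=
    Submodule.eq_bot_of_le_smul_of_le_jacobson_bot I _ hKfg hKIK hIjac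
  have hFinj : Function.Injective F := LinearMap.ker_eq_bot.mp hKbot
  exact Module.Free.of_equiv (LinearEquiv.ofBijective F ⟨hFinj, hFsurj⟩)
end

section
/- Let A be a commutative unital complex Banach algebra and G a finite group of continuous algebra automorphisms of A, with invariant subalgebra A_G. Then the restriction map that sends a character x : A → ℂ to x|_{A_G} induces a bijection between the orbit space M(A)/G of the character space of A under the induced G-action and the character space M(A_G): two characters x, y of A have the same restriction to A_G if and only if y = x ∘ g for some g ∈ G, and every character of A_G arises as such a restriction. -/
open WeakDual

/-- The subalgebra of elements fixed by a group of algebra automorphisms. -/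
def fixedSubalgebra {A : Type*} [CommRing A] [Algebra ℂ A] {G : Type*} [Group G]
    (ρ : G →* (A ≃ₐ[ℂ] A)) : Subalgebra ℂ A where
  carrier := {a | ∀ g : G, ρ g a = a}
  mul_mem' := fun ha hb g => by rw [map_mul, ha g, hb g]
  add_mem' := fun ha hb g => by rw [map_add, ha g, hb g]
  algebraMap_mem' := fun c g => by rw [AlgEquiv.commutes]

lemma mem_fixedSubalgebra {A : Type*} [CommRing A] [Algebra ℂ A] {G : Type*} [Group G]
    (ρ : G →* (A ≃ₐ[ℂ] A)) (a : A) : a ∈ fixedSubalgebra ρ ↔ ∀ g : G, ρ g a = a := Iff.rfl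

/-- Restriction of characters to the invariant subalgebra identifies the orbit
space `M(A)/G` with `M(A_G)`: two characters of `A` agree on `A_G` iff they lie
in the same `G`-orbit, and every character of `A_G` is a restriction of a
character of `A`. -/
theorem stmt9 (A : Type) [NormedCommRing A] [NormedAlgebra ℂ A] [CompleteSpace A]
    (G : Type) [Group G] [Fintype G] (ρ : G →* (A ≃ₐ[ℂ] A))
    (hcont : ∀ g : G, Continuous (ρ g)) :
    (∀ x y : characterSpace ℂ A,
      ((∀ a : A, (∀ g : G, ρ g a = a) → x a = y a) ↔
        ∃ g : G, ∀ a : A, y a = x (ρ g a))) ∧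
    (∀ φ : characterSpace ℂ (fixedSubalgebra ρ),
      ∃ x : characterSpace ℂ A, ∀ a : fixedSubalgebra ρ, φ a = x (a : A)) := by
  constructor
  · intro x y
    constructor
    · -- agreement on invariants implies same orbit
      intro h
      by_contra hn
      push_neg at hn
      -- kernels of the composed characters
      set X : G → (A →ₐ[ℂ] ℂ) := fun g => (CharacterSpace.equivAlgHom x).comp (ρ g).toAlgHom
        with hX
      set Y : G → (A →ₐ[ℂ] ℂ) := fun g => (CharacterSpace.equivAlgHom y).comp (ρ g).toAlgHom
        with hY
      have hXapp : ∀ g a, X g a = x (ρ g a) := fun g a => rfl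
      have hYapp : ∀ g a, Y g a = y (ρ g a) := fun g a => rfl
      -- if ker (X h') ≤ ker (Y g) then the characters agree, contradicting hn
      have hker : ∀ g h' : G, ¬ RingHom.ker (X h') ≤ RingHom.ker (Y g) := by
        intro g h' hle
        have heq : ∀ a, X h' a = Y g a := by
          intro a
          have h1 : X h' (a - algebraMap ℂ A (X h' a)) = 0 := by
            simp
          have h2 := hle (RingHom.mem_ker.mpr h1)
          rw [RingHom.mem_ker, map_sub, AlgHomClass.commutes, sub_eq_zero] at h2
          exact h2.symm
        obtain ⟨a, ha⟩ := hn (h' * g⁻¹)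
        apply ha
        have := heq (ρ g⁻¹ a)
        simp only [hXapp, hYapp] at this
        have h3 : ρ g (ρ g⁻¹ a) = a := by
          rw [← AlgEquiv.mul_apply, ← map_mul, mul_inv_cancel, map_one, AlgEquiv.one_apply]
        have h4 : ρ h' (ρ g⁻¹ a) = ρ (h' * g⁻¹) a := by
          rw [map_mul, AlgEquiv.mul_apply]
        rw [h3, h4] at this
        exact this.symm
      -- prime avoidance
      have hprime : ∀ g : G, (RingHom.ker (Y g)).IsPrime := fun g =>
        RingHom.ker_isPrime (Y g)
      set I : Ideal A := Finset.univ.inf fun g : G => RingHom.ker (X g) with hIdef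
      have hI : ¬ (I : Set A) ⊆
          ⋃ g ∈ ((Finset.univ : Finset G) : Set G), (RingHom.ker (Y g) : Set A) := by
        rw [Ideal.subset_union_prime 1 1 (fun g _ _ _ => hprime g)]
        rintro ⟨g, -, hle⟩
        rw [(hprime g).inf_le'] at hle
        obtain ⟨h', -, hle⟩ := hle
        exact hker g h' hle
      rw [Set.not_subset] at hI
      obtain ⟨a, haI, haU⟩ := hI
      have haX : ∀ g : G, x (ρ g a) = 0 := by
        intro g
        have : a ∈ RingHom.ker (X g) := by
          have hle := (Finset.inf_le (Finset.mem_univ g) :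
            (Finset.univ.inf fun g : G => RingHom.ker (X g)) ≤ RingHom.ker (X g))
          exact hle (hIdef ▸ haI)
        simpa [hXapp] using this
      have haY : ∀ g : G, y (ρ g a) ≠ 0 := by
        intro g hg
        apply haU
        simp only [Set.mem_iUnion]
        exact ⟨g, Finset.mem_univ g, by simpa [hYapp] using hg⟩
      -- the invariant element
      set b : A := ∏ g : G, ρ g a with hb
      have hbinv : ∀ h' : G, ρ h' b = b := by
        intro h'
        rw [hb, map_prod]
        apply Fintype.prod_equiv (Equiv.mulLeft h')
        intro g
        have h5 : ρ h' (ρ g a) = ρ (h' * g) a := by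
          rw [map_mul, AlgEquiv.mul_apply]
        rw [h5]
        rfl
      have hxb : x b = 0 := by
        rw [hb, map_prod]
        exact Finset.prod_eq_zero (Finset.mem_univ 1) (haX 1)
      have hyb : y b ≠ 0 := by
        rw [hb, map_prod]
        exact Finset.prod_ne_zero_iff.mpr fun g _ => haY g
      exact hyb (h b hbinv ▸ hxb)
    · rintro ⟨g, hg⟩ a ha
      rw [hg a, ha g]
  · -- surjectivity onto characters of the fixed subalgebra
    intro φ
    -- the averaging sum
    set Q : A → A := fun a => ∑ g : G, ρ g a with hQ
    have hQmem : ∀ a, Q a ∈ fixedSubalgebra ρ := by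
      intro a
      rw [mem_fixedSubalgebra]
      intro h'
      rw [hQ]
      simp only [map_sum]
      apply Fintype.sum_equiv (Equiv.mulLeft h')
      intro g
      have h5 : ρ h' (ρ g a) = ρ (h' * g) a := by
        rw [map_mul, AlgEquiv.mul_apply]
      rw [h5]
      rfl
    have hQmul : ∀ (r : A) (b : fixedSubalgebra ρ), Q (r * (b : A)) = Q r * (b : A) := by
      intro r b
      rw [hQ]
      simp only [map_mul, Finset.sum_mul]
      exact Finset.sum_congr rfl fun g _ => by rw [b.2 g]
    set s : Set A := {a : A | ∃ b : fixedSubalgebra ρ, φ b = 0 ∧ (b : A) = a} with hs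
    set J : Ideal A := Ideal.span s with hJ
    have hJne : J ≠ ⊤ := by
      intro htop
      have h1 : (1 : A) ∈ J := htop ▸ Submodule.mem_top
      have key : ∀ a ∈ J, ∀ r : A, φ ⟨Q (r * a), hQmem _⟩ = 0 := by
        intro a haJ
        refine Submodule.span_induction ?_ ?_ ?_ ?_ haJ
        · rintro _ ⟨b, hb0, rfl⟩ r
          have : (⟨Q (r * (b : A)), hQmem _⟩ : fixedSubalgebra ρ) =
              ⟨Q r, hQmem r⟩ * b := by
            ext
            exact hQmul r b
          rw [this, map_mul, hb0, mul_zero]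
        · intro r
          have : (⟨Q (r * 0), hQmem _⟩ : fixedSubalgebra ρ) = 0 := by
            ext
            simp [hQ]
          rw [this, map_zero]
        · intro z w _ _ hz hw r
          have : (⟨Q (r * (z + w)), hQmem _⟩ : fixedSubalgebra ρ) =
              ⟨Q (r * z), hQmem _⟩ + ⟨Q (r * w), hQmem _⟩ := by
            ext
            simp [hQ, mul_add, Finset.sum_add_distrib]
          rw [this, map_add, hz r, hw r, add_zero]
        · intro c z _ hz r
          have : r * (c • z) = (r * c) * z := by
            rw [smul_eq_mul]; ring
          rw [this]
          exact hz (r * c)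
      have h2 := key 1 h1 1
      have h3 : (⟨Q (1 * 1), hQmem _⟩ : fixedSubalgebra ρ) =
          Fintype.card G • (1 : fixedSubalgebra ρ) := by
        ext
        simp [hQ]
      rw [h3, map_nsmul, map_one, nsmul_eq_mul, mul_one] at h2
      exact Nat.cast_ne_zero.mpr Fintype.card_ne_zero h2
    obtain ⟨M, hM, hJM⟩ := Ideal.exists_le_maximal J hJne
    refine ⟨M.toCharacterSpace, ?_⟩
    intro a
    have hmem : ((a - algebraMap ℂ (fixedSubalgebra ρ) (φ a) : fixedSubalgebra ρ) : A) ∈ M := by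
      apply hJM
      apply Ideal.subset_span
      refine ⟨_, ?_, rfl⟩
      rw [map_sub, AlgHomClass.commutes, Algebra.algebraMap_self, RingHom.id_apply, sub_self]
    have h0 := Ideal.toCharacterSpace_apply_eq_zero_of_mem M hmem
    have hcoe : ((a - algebraMap ℂ (fixedSubalgebra ρ) (φ a) : fixedSubalgebra ρ) : A) =
        (a : A) - algebraMap ℂ A (φ a) := by
      push_cast
      rfl
    rw [hcoe, map_sub, AlgHomClass.commutes, sub_eq_zero] at h0
    exact h0.symm
end

section
/- Let A_G be the invariant subalgebra of a commutative unital complex Banach algebra A under a finite group G of continuous automorphisms. If a₁, …, a_k ∈ A_G are such that for every character y of A the values y(a₁), …, y(a_k) are not all zero, then there exist b̃₁, …, b̃_k ∈ A_G with b̃₁a₁ + ⋯ + b̃_k a_k = 1; consequently no character of A_G annihilates all of a₁, …, a_k. -/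
open WeakDual

/-- If `G`-invariant elements `a₁, …, a_k` of a commutative unital complex
Banach algebra `A` have no common zero on the character space of `A`, then
they generate the unit ideal of the invariant subalgebra `A_G`; consequently
no character of `A_G` annihilates all of them. -/
theorem stmt10 (A : Type) [NormedCommRing A] [NormedAlgebra ℂ A] [CompleteSpace A]
    (G : Type) [Group G] [Fintype G] (ρ : G →* (A ≃ₐ[ℂ] A))
    (hcont : ∀ g : G, Continuous (ρ g))
    (k : ℕ) (a : Fin k → fixedSubalgebra ρ)
    (h : ∀ y : characterSpace ℂ A, ∃ i : Fin k, y ((a i : A)) ≠ 0) :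
    (∃ b : Fin k → fixedSubalgebra ρ, ∑ i, b i * a i = 1) ∧
    (∀ φ : characterSpace ℂ (fixedSubalgebra ρ), ∃ i : Fin k, φ (a i) ≠ 0) := by
  -- Step 1: the aᵢ generate the unit ideal in A.
  have hspan : (1 : A) ∈ Ideal.span (Set.range (fun i => (a i : A))) := by
    by_contra h1
    obtain ⟨M, hM, hle⟩ := Ideal.exists_le_maximal _ ((Ideal.ne_top_iff_one _).mpr h1)
    haveI := hM
    obtain ⟨i, hi⟩ := h M.toCharacterSpace
    exact hi (M.toCharacterSpace_apply_eq_zero_of_mem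
      (hle (Ideal.subset_span ⟨i, rfl⟩)))
  obtain ⟨c, hc⟩ := Ideal.mem_span_range_iff_exists_fun.mp hspan
  -- Step 2: average the coefficients over G.
  set n : ℂ := (Fintype.card G : ℂ) with hn
  have hn0 : n ≠ 0 := Nat.cast_ne_zero.mpr Fintype.card_ne_zero
  set b' : Fin k → A := fun i => n⁻¹ • ∑ g : G, ρ g (c i) with hb'
  have hbfix : ∀ i, b' i ∈ fixedSubalgebra ρ := by
    intro i g
    simp only [hb', map_smul, map_sum]
    congr 1
    have : ∀ g' : G, ρ g (ρ g' (c i)) = ρ (g * g') (c i) := by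
      intro g'; rw [map_mul]; rfl
    rw [Finset.sum_congr rfl (fun g' _ => this g')]
    exact Fintype.sum_equiv (Equiv.mulLeft g) _ _ (fun g' => rfl)
  have hsum : ∑ i, b' i * (a i : A) = 1 := by
    have key : ∀ g : G, ρ g (∑ i, c i * (a i : A)) = ∑ i, ρ g (c i) * (a i : A) := by
      intro g
      rw [map_sum]
      exact Finset.sum_congr rfl fun i _ => by rw [map_mul, (a i).2 g]
    have : ∑ i, b' i * (a i : A)
        = n⁻¹ • ∑ g : G, ρ g (∑ i, c i * (a i : A)) := by
      simp only [hb', key, Finset.smul_sum, smul_mul_assoc, Finset.sum_mul]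
      rw [Finset.sum_comm]
    rw [this, hc]
    simp only [map_one, Finset.sum_const, Finset.card_univ, nsmul_eq_mul, mul_one]
    have hcard : ((Fintype.card G : ℕ) : A) = n • (1 : A) := by
      rw [hn, ← Algebra.algebraMap_eq_smul_one, map_natCast]
    rw [hcard, smul_smul, inv_mul_cancel₀ hn0, one_smul]
  refine ⟨⟨fun i => ⟨b' i, hbfix i⟩, ?_⟩, ?_⟩
  · apply Subtype.ext
    push_cast
    simpa using hsum
  · intro φ
    by_contra hφ
    push_neg at hφ
    obtain ⟨b, hb⟩ : ∃ b : Fin k → fixedSubalgebra ρ, ∑ i, b i * a i = 1 :=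
      ⟨fun i => ⟨b' i, hbfix i⟩, by apply Subtype.ext; push_cast; simpa using hsum⟩
    have := congrArg φ hb
    simp only [map_sum, map_mul, map_one] at this
    simp [hφ] at this
end

section
/- Let B and C be unital closed subalgebras of a commutative unital complex Banach algebra 𝔄, satisfying: there is a constant c such that for all characters ξ of B, all n, and all bᵢ ∈ B, cᵢ ∈ C, one has ‖∑ ξ(b_k) c_k‖_C ≤ c‖∑ b_k c_k‖_𝔄. Then for each character ξ of B, the map ∑ b_k c_k ↦ ∑ ξ(b_k) c_k extends to a bounded unital algebra homomorphism P_ξ from the closure of the subalgebra generated by B and C in 𝔄 onto C. -/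
open WeakDual

section Aux

variable {𝔄 : Type} [NormedCommRing 𝔄] [NormedAlgebra ℂ 𝔄]
variable {B C : Subalgebra ℂ 𝔄}

/-- value in 𝔄 of a formal sum of products -/
def vsum (l : List (B × C)) : 𝔄 := (l.map fun p => (p.1 : 𝔄) * (p.2 : 𝔄)).sum

/-- projected value -/
noncomputable def wsum (ξ : characterSpace ℂ B) (l : List (B × C)) : 𝔄 :=
  (l.map fun p => (ξ p.1 : ℂ) • ((p.2 : 𝔄))).sum

lemma vsum_append (l l' : List (B × C)) : vsum (𝔄 := 𝔄) (l ++ l') = vsum l + vsum l' := by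
  simp [vsum]

lemma wsum_append (ξ : characterSpace ℂ B) (l l' : List (B × C)) :
    wsum ξ (l ++ l') = wsum ξ l + wsum ξ l' := by
  simp [wsum]

/-- negation of a representation -/
def lneg (l : List (B × C)) : List (B × C) := l.map fun p => (-p.1, p.2)

lemma vsum_lneg (l : List (B × C)) : vsum (𝔄 := 𝔄) (lneg l) = -vsum l := by
  induction l with
  | nil => simp [vsum, lneg]
  | cons p l ih => simp [vsum, lneg] at ih ⊢; simp [ih]; ring

lemma wsum_lneg (ξ : characterSpace ℂ B) (l : List (B × C)) :
    wsum ξ (lneg l) = -wsum ξ l := by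
  induction l with
  | nil => simp [wsum, lneg]
  | cons p l ih => simp [wsum, lneg] at ih ⊢; simp [ih]; abel

/-- scalar multiple of a representation -/
def lsmul (r : ℂ) (l : List (B × C)) : List (B × C) := l.map fun p => (r • p.1, p.2)

lemma vsum_lsmul (r : ℂ) (l : List (B × C)) : vsum (𝔄 := 𝔄) (lsmul r l) = r • vsum l := by
  induction l with
  | nil => simp [vsum, lsmul]
  | cons p l ih =>
      simp [vsum, lsmul] at ih ⊢
      simp [ih, smul_add, smul_mul_assoc]

lemma wsum_lsmul (ξ : characterSpace ℂ B) (r : ℂ) (l : List (B × C)) :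
    wsum ξ (lsmul r l) = r • wsum ξ l := by
  induction l with
  | nil => simp [wsum, lsmul]
  | cons p l ih =>
      simp [wsum, lsmul] at ih ⊢
      simp [ih, smul_add, map_smul, smul_smul]

/-- product of two representations -/
def lmul (l l' : List (B × C)) : List (B × C) :=
  l.flatMap fun p => l'.map fun q => (p.1 * q.1, p.2 * q.2)

lemma vsum_inner (p : B × C) (l' : List (B × C)) :
    vsum (𝔄 := 𝔄) (l'.map fun q => ((p.1 * q.1 : B), (p.2 * q.2 : C)))
      = ((p.1 : 𝔄) * (p.2 : 𝔄)) * vsum l' := by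
  induction l' with
  | nil => simp [vsum]
  | cons q l' ih' => simp [vsum] at ih' ⊢; rw [ih']; ring

lemma vsum_lmul (l l' : List (B × C)) : vsum (𝔄 := 𝔄) (lmul l l') = vsum l * vsum l' := by
  induction l with
  | nil => simp [vsum, lmul]
  | cons p l ih =>
      have inner := vsum_inner (𝔄 := 𝔄) p l'
      simp [lmul, vsum, List.sum_append] at ih inner ⊢
      rw [inner, ih]; ring

lemma wsum_inner (ξ : characterSpace ℂ B) (p : B × C) (l' : List (B × C)) :
    wsum ξ (l'.map fun q => ((p.1 * q.1 : B), (p.2 * q.2 : C)))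
      = ((ξ p.1 : ℂ) • (p.2 : 𝔄)) * wsum ξ l' := by
  induction l' with
  | nil => simp [wsum]
  | cons q l' ih' =>
      simp [wsum] at ih' ⊢
      rw [ih']
      simp [mul_add, smul_add, mul_smul_comm, mul_smul, smul_mul_assoc]

lemma wsum_lmul (ξ : characterSpace ℂ B) (l l' : List (B × C)) :
    wsum ξ (lmul l l') = wsum ξ l * wsum ξ l' := by
  induction l with
  | nil => simp [wsum, lmul]
  | cons p l ih =>
      have inner := wsum_inner (𝔄 := 𝔄) ξ p l'
      simp [lmul, wsum, List.sum_append] at ih inner ⊢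
      rw [inner, ih]
      simp [add_mul, smul_mul_assoc]

lemma wsum_mem (ξ : characterSpace ℂ B) (l : List (B × C)) : wsum ξ l ∈ C := by
  induction l with
  | nil => simpa [wsum] using C.zero_mem
  | cons p l ih =>
      simp [wsum] at ih ⊢
      exact add_mem (C.smul_mem p.2.2 _) ih

lemma vsum_eq_finsum (l : List (B × C)) :
    vsum (𝔄 := 𝔄) l = ∑ i : Fin l.length, ((l.get i).1 : 𝔄) * ((l.get i).2 : 𝔄) := by
  conv_lhs => rw [vsum, ← List.ofFn_get l]
  rw [List.map_ofFn, List.sum_ofFn]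
  simp

lemma wsum_eq_finsum (ξ : characterSpace ℂ B) (l : List (B × C)) :
    wsum ξ l = ∑ i : Fin l.length, (ξ (l.get i).1 : ℂ) • ((l.get i).2 : 𝔄) := by
  conv_lhs => rw [wsum, ← List.ofFn_get l]
  rw [List.map_ofFn, List.sum_ofFn]
  simp

/-- the subalgebra of elements admitting a representation -/
def reprAlg (B C : Subalgebra ℂ 𝔄) : Subalgebra ℂ 𝔄 where
  carrier := {x | ∃ l : List (B × C), vsum l = x}
  mul_mem' := by rintro x y ⟨l, rfl⟩ ⟨l', rfl⟩; exact ⟨lmul l l', vsum_lmul l l'⟩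
  add_mem' := by rintro x y ⟨l, rfl⟩ ⟨l', rfl⟩; exact ⟨l ++ l', vsum_append l l'⟩
  algebraMap_mem' := fun r =>
    ⟨[(algebraMap ℂ B r, 1)], by
      simp [vsum, Algebra.algebraMap_eq_smul_one]⟩

lemma sup_le_reprAlg : B ⊔ C ≤ reprAlg B C := by
  apply sup_le
  · intro b hb; exact ⟨[(⟨b, hb⟩, 1)], by simp [vsum]⟩
  · intro x hx; exact ⟨[(1, ⟨x, hx⟩)], by simp [vsum]⟩

end Aux

/-- Under the bounded-projection condition (6.1), for each character `ξ` of `B`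
the map `∑ bₖcₖ ↦ ∑ ξ(bₖ)cₖ` extends to a bounded unital algebra homomorphism
from the closed subalgebra generated by `B` and `C` onto `C`. -/
theorem stmt11 (𝔄 : Type) [NormedCommRing 𝔄] [NormedAlgebra ℂ 𝔄] [CompleteSpace 𝔄]
    (B C : Subalgebra ℂ 𝔄) (hB : IsClosed (B : Set 𝔄)) (hC : IsClosed (C : Set 𝔄))
    (c : ℝ)
    (hcond : ∀ (ξ : characterSpace ℂ B) (N : ℕ) (b : Fin N → B) (cc : Fin N → C),
      ‖∑ i, ξ (b i) • ((cc i : 𝔄))‖ ≤ c * ‖∑ i, (b i : 𝔄) * (cc i : 𝔄)‖) :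
    ∀ ξ : characterSpace ℂ B,
      ∃ P : (Subalgebra.topologicalClosure (B ⊔ C)) →ₐ[ℂ] 𝔄,
        Continuous P ∧ Set.range P = (C : Set 𝔄) ∧
        ∀ (b : B) (cc : C),
          P ⟨(b : 𝔄) * (cc : 𝔄),
              Subalgebra.le_topologicalClosure _
                (mul_mem (Algebra.mem_sup_left b.2) (Algebra.mem_sup_right cc.2))⟩
            = ξ b • (cc : 𝔄) := by
  intro ξ
  classical
  set T := Subalgebra.topologicalClosure (B ⊔ C) with hTdef
  -- key bound
  have hbound : ∀ l : List (B × C), ‖wsum ξ l‖ ≤ c * ‖vsum (𝔄 := 𝔄) l‖ := by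
    intro l
    have := hcond ξ l.length (fun i => (l.get i).1) (fun i => (l.get i).2)
    rwa [← wsum_eq_finsum, ← vsum_eq_finsum] at this
  -- well-definedness
  have hwd : ∀ l l' : List (B × C), vsum (𝔄 := 𝔄) l = vsum l' → wsum ξ l = wsum ξ l' := by
    intro l l' h
    have h0 : vsum (𝔄 := 𝔄) (l ++ lneg l') = 0 := by
      rw [vsum_append, vsum_lneg, h]; ring
    have hb := hbound (l ++ lneg l')
    rw [h0, norm_zero, mul_zero] at hb
    have hz : wsum ξ (l ++ lneg l') = 0 :=
      norm_eq_zero.mp (le_antisymm hb (norm_nonneg _))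
    rw [wsum_append, wsum_lneg, ← sub_eq_add_neg] at hz
    exact sub_eq_zero.mp hz
  have hrepx : ∀ x : (B ⊔ C : Subalgebra ℂ 𝔄), ∃ l : List (B × C), vsum l = (x : 𝔄) :=
    fun x => sup_le_reprAlg x.2
  let g : (B ⊔ C : Subalgebra ℂ 𝔄) → 𝔄 := fun x => wsum ξ (hrepx x).choose
  have hg : ∀ (x : (B ⊔ C : Subalgebra ℂ 𝔄)) (l : List (B × C)),
      vsum l = (x : 𝔄) → g x = wsum ξ l :=
    fun x l h => hwd _ _ ((hrepx x).choose_spec.trans h.symm)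
  have hgC : ∀ x, g x ∈ C := fun x => wsum_mem ξ _
  -- linear structure of g
  let f0 : (B ⊔ C : Subalgebra ℂ 𝔄) →ₗ[ℂ] 𝔄 :=
    { toFun := g
      map_add' := by
        intro x y
        obtain ⟨l, hl⟩ := hrepx x
        obtain ⟨l', hl'⟩ := hrepx y
        rw [hg x l hl, hg y l' hl',
          hg (x + y) (l ++ l') (by rw [vsum_append, hl, hl']; rfl), wsum_append]
      map_smul' := by
        intro r x
        obtain ⟨l, hl⟩ := hrepx x
        show g (r • x) = r • g x
        rw [hg x l hl,
          hg (r • x) (lsmul r l) (by rw [vsum_lsmul, hl]; rfl), wsum_lsmul] }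
  have hgmul : ∀ x y, g (x * y) = g x * g y := by
    intro x y
    obtain ⟨l, hl⟩ := hrepx x
    obtain ⟨l', hl'⟩ := hrepx y
    rw [hg x l hl, hg y l' hl',
      hg (x * y) (lmul l l') (by rw [vsum_lmul, hl, hl']; rfl), wsum_lmul]
  have hgone : g 1 = 1 := by
    rw [hg 1 [(1, 1)] (by simp [vsum])]
    simp [wsum]
  have gbound : ∀ x, ‖f0 x‖ ≤ max c 0 * ‖x‖ := by
    intro x
    obtain ⟨l, hl⟩ := hrepx x
    have : f0 x = wsum ξ l := hg x l hl
    rw [this]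
    calc ‖wsum ξ l‖ ≤ c * ‖vsum (𝔄 := 𝔄) l‖ := hbound l
      _ ≤ max c 0 * ‖vsum (𝔄 := 𝔄) l‖ :=
          mul_le_mul_of_nonneg_right (le_max_left _ _) (norm_nonneg _)
      _ = max c 0 * ‖x‖ := by rw [hl]; rfl
  let F := f0.mkContinuous (max c 0) gbound
  -- inclusion into the closure
  let eL : (B ⊔ C : Subalgebra ℂ 𝔄) →ₗ[ℂ] T :=
    { toFun := fun x => ⟨x.1, Subalgebra.le_topologicalClosure _ x.2⟩
      map_add' := fun _ _ => rfl
      map_smul' := fun _ _ => rfl }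
  have eiso : Isometry eL := AddMonoidHomClass.isometry_of_norm _ (fun x => rfl)
  let e : (B ⊔ C : Subalgebra ℂ 𝔄) →L[ℂ] T := ⟨eL, eiso.continuous⟩
  have h_dense : DenseRange e := by
    intro y
    rw [closure_subtype]
    have himg : (Subtype.val '' Set.range e) = ((B ⊔ C : Subalgebra ℂ 𝔄) : Set 𝔄) := by
      ext z
      constructor
      · rintro ⟨w, ⟨x, rfl⟩, rfl⟩; exact x.2
      · intro hz; exact ⟨e ⟨z, hz⟩, ⟨⟨z, hz⟩, rfl⟩, rfl⟩
    rw [himg]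
    exact y.2
  have h_e : IsUniformInducing e := eiso.isUniformInducing
  let Pl : T →L[ℂ] 𝔄 := F.extend e
  have hPle : ∀ x, Pl (e x) = F x := fun x =>
    ContinuousLinearMap.extend_eq F h_dense h_e x
  have heone : (1 : T) = e 1 := rfl
  have hemul : ∀ x y, e x * e y = e (x * y) := fun _ _ => rfl
  have hPlone : Pl 1 = 1 := by rw [heone, hPle]; exact hgone
  have hPlmul : ∀ x y : T, Pl (x * y) = Pl x * Pl y := by
    refine DenseRange.induction_on₂ h_dense ?_ ?_
    · exact isClosed_eq (Pl.continuous.comp continuous_mul)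
        ((Pl.continuous.comp continuous_fst).mul (Pl.continuous.comp continuous_snd))
    · intro a b
      rw [hemul, hPle, hPle, hPle]
      exact hgmul a b
  refine ⟨{ toFun := Pl
            map_one' := hPlone
            map_mul' := hPlmul
            map_zero' := map_zero Pl
            map_add' := map_add Pl
            commutes' := ?_ }, ?_, ?_, ?_⟩
  · intro r
    rw [Algebra.algebraMap_eq_smul_one, Algebra.algebraMap_eq_smul_one]
    show Pl (r • (1 : T)) = r • (1 : 𝔄)
    rw [map_smul, hPlone]
  · exact Pl.continuous
  · apply Set.Subset.antisymm
    · rintro _ ⟨x, rfl⟩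
      show Pl x ∈ (C : Set 𝔄)
      refine DenseRange.induction_on h_dense x ?_ ?_
      · exact IsClosed.preimage Pl.continuous hC
      · intro a
        show Pl (e a) ∈ (C : Set 𝔄)
        rw [hPle]
        exact hgC a
    · intro y hy
      refine ⟨e ⟨y, Algebra.mem_sup_right hy⟩, ?_⟩
      show Pl _ = y
      rw [hPle]
      have : F ⟨y, Algebra.mem_sup_right hy⟩ = wsum ξ [(1, ⟨y, hy⟩)] :=
        hg _ _ (by simp [vsum])
      rw [this]
      simp [wsum]
  · intro b cc
    have hmem : (b : 𝔄) * (cc : 𝔄) ∈ B ⊔ C :=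
      mul_mem (Algebra.mem_sup_left b.2) (Algebra.mem_sup_right cc.2)
    show Pl ⟨(b : 𝔄) * (cc : 𝔄), _⟩ = ξ b • (cc : 𝔄)
    have he' : (⟨(b : 𝔄) * (cc : 𝔄), Subalgebra.le_topologicalClosure _ hmem⟩ : T)
        = e ⟨(b : 𝔄) * (cc : 𝔄), hmem⟩ := rfl
    rw [he', hPle]
    have : F ⟨(b : 𝔄) * (cc : 𝔄), hmem⟩ = wsum ξ [(b, cc)] := hg _ _ (by simp [vsum])
    rw [this]
    simp [wsum]
end

section
/- Under the hypotheses of the bounded-projection condition (there is c > 0 with ‖∑ ξ(b_k)c_k‖_C ≤ c‖∑ b_k c_k‖_𝔄 for all characters ξ of B), the map F : M(B) × M(C) → M(B ⊗̂_𝔄 C) defined by F(ξ, η) := η ∘ P_ξ is a homeomorphism, where P_ξ is the bounded multiplicative projection extending ∑ b_k c_k ↦ ∑ ξ(b_k) c_k. In particular, the maximal ideal space of B ⊗̂_𝔄 C is homeomorphic to M(B) × M(C). -/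
open WeakDual

private lemma sum_fin_mul' {M₀ : Type*} [AddCommMonoid M₀] {N M : ℕ} (F : Fin N → Fin M → M₀) :
    ∑ k : Fin (N * M), F (finProdFinEquiv.symm k).1 (finProdFinEquiv.symm k).2
      = ∑ i, ∑ j, F i j := by
  have h1 : ∑ q : Fin N × Fin M, F q.1 q.2 = ∑ i, ∑ j, F i j := Fintype.sum_prod_type _
  rw [← h1]
  exact Equiv.sum_comp finProdFinEquiv.symm (fun q : Fin N × Fin M => F q.1 q.2)

private lemma repr_of_mem_sup' {𝔄 : Type*} [CommRing 𝔄] [Algebra ℂ 𝔄] {B C : Subalgebra ℂ 𝔄}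
    {x : 𝔄} (hx : x ∈ B ⊔ C) :
    ∃ (N : ℕ) (b : Fin N → B) (cc : Fin N → C),
      x = ∑ i, (b i : 𝔄) * (cc i : 𝔄) := by
  let S : Subalgebra ℂ 𝔄 :=
    { carrier := {x | ∃ (N : ℕ) (b : Fin N → B) (cc : Fin N → C),
        x = ∑ i, (b i : 𝔄) * (cc i : 𝔄)}
      one_mem' := ⟨1, fun _ => 1, fun _ => 1, by simp⟩
      zero_mem' := ⟨0, fun i => 1, fun i => 1, by simp⟩
      add_mem' := by
        rintro x y ⟨N, b, cc, rfl⟩ ⟨M, b', cc', rfl⟩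
        refine ⟨N + M, Fin.append b b', Fin.append cc cc', ?_⟩
        rw [Fin.sum_univ_add]
        simp
      mul_mem' := by
        rintro x y ⟨N, b, cc, rfl⟩ ⟨M, b', cc', rfl⟩
        refine ⟨N * M, fun k => b (finProdFinEquiv.symm k).1 * b' (finProdFinEquiv.symm k).2,
          fun k => cc (finProdFinEquiv.symm k).1 * cc' (finProdFinEquiv.symm k).2, ?_⟩
        rw [sum_fin_mul' (fun i j => ((b i * b' j : B) : 𝔄) * ((cc i * cc' j : C) : 𝔄)),
          Finset.sum_mul_sum]
        push_cast
        refine Finset.sum_congr rfl fun i _ => Finset.sum_congr rfl fun j _ => by ring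
      algebraMap_mem' := fun r =>
        ⟨1, fun _ => algebraMap ℂ B r, fun _ => 1, by simp⟩ }
  have hBS : B ≤ S := fun z hz => ⟨1, fun _ => ⟨z, hz⟩, fun _ => 1, by simp⟩
  have hCS : C ≤ S := fun z hz => ⟨1, fun _ => 1, fun _ => ⟨z, hz⟩, by simp⟩
  exact sup_le hBS hCS hx

/-- Inclusion of nested subalgebras of a normed algebra, as a continuous linear map. -/
private noncomputable def inclCLM {𝔄 : Type} [NormedCommRing 𝔄] [NormedAlgebra ℂ 𝔄]
    {S T : Subalgebra ℂ 𝔄} (h : S ≤ T) : S →L[ℂ] T :=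
  { toLinearMap := (Subalgebra.inclusion h).toLinearMap
    cont := (AddMonoidHomClass.isometry_of_norm
      (Subalgebra.inclusion h).toLinearMap (fun _ => rfl)).continuous }

private lemma inclCLM_isometry {𝔄 : Type} [NormedCommRing 𝔄] [NormedAlgebra ℂ 𝔄]
    {S T : Subalgebra ℂ 𝔄} (h : S ≤ T) : Isometry (inclCLM h) :=
  AddMonoidHomClass.isometry_of_norm _ (fun _ => rfl)

set_option maxHeartbeats 1000000 in
set_option synthInstance.maxHeartbeats 200000 in
/-- Under the bounded-projection condition (6.1), the maximal ideal space of
`B ⊗̂_𝔄 C` (the closure of the subalgebra generated by `B` and `C`) is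
homeomorphic to `M(B) × M(C)` via `(ξ, η) ↦ η ∘ P_ξ`; on products `b·c` the
character `F(ξ,η)` takes the value `ξ(b)·η(c)`. -/
theorem stmt12 (𝔄 : Type) [NormedCommRing 𝔄] [NormedAlgebra ℂ 𝔄] [CompleteSpace 𝔄]
    (B C : Subalgebra ℂ 𝔄) (hB : IsClosed (B : Set 𝔄)) (hC : IsClosed (C : Set 𝔄))
    (c : ℝ)
    (hcond : ∀ (ξ : characterSpace ℂ B) (N : ℕ) (b : Fin N → B) (cc : Fin N → C),
      ‖∑ i, ξ (b i) • ((cc i : 𝔄))‖ ≤ c * ‖∑ i, (b i : 𝔄) * (cc i : 𝔄)‖) :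
    ∃ F : (characterSpace ℂ B × characterSpace ℂ C) ≃ₜ
            characterSpace ℂ (Subalgebra.topologicalClosure (B ⊔ C)),
      ∀ (ξ : characterSpace ℂ B) (η : characterSpace ℂ C) (b : B) (cc : C),
        F (ξ, η) ⟨(b : 𝔄) * (cc : 𝔄),
            Subalgebra.le_topologicalClosure _
              (mul_mem (Algebra.mem_sup_left b.2) (Algebra.mem_sup_right cc.2))⟩
          = ξ b * η cc := by
  classical
  set D := Subalgebra.topologicalClosure (B ⊔ C) with hDdef
  have hsub : (B ⊔ C) ≤ D := Subalgebra.le_topologicalClosure _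
  have hBD : B ≤ D := le_trans le_sup_left hsub
  have hCD : C ≤ D := le_trans le_sup_right hsub
  have hDclosed : IsClosed (D : Set 𝔄) := Subalgebra.isClosed_topologicalClosure _
  haveI : CompleteSpace D := hDclosed.completeSpace_coe
  set e : (B ⊔ C : Subalgebra ℂ 𝔄) →L[ℂ] D := inclCLM hsub with hedef
  set jB : B →L[ℂ] D := inclCLM hBD with hjBdef
  set jC : C →L[ℂ] D := inclCLM hCD with hjCdef
  have hdense : DenseRange (e : (B ⊔ C : Subalgebra ℂ 𝔄) → D) := by
    intro y
    rw [closure_subtype]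
    have himg : Subtype.val '' Set.range (e : (B ⊔ C : Subalgebra ℂ 𝔄) → D)
        = ((B ⊔ C : Subalgebra ℂ 𝔄) : Set 𝔄) := by
      ext w
      constructor
      · rintro ⟨z, ⟨u, rfl⟩, rfl⟩; exact u.2
      · intro hw; exact ⟨e ⟨w, hw⟩, ⟨⟨w, hw⟩, rfl⟩, rfl⟩
    rw [himg, ← Subalgebra.topologicalClosure_coe]
    exact y.2
  -- restriction maps
  have memres : ∀ (S : Subalgebra ℂ 𝔄) (hS : S ≤ D) (χ : characterSpace ℂ D),
      ((CharacterSpace.toCLM χ).comp (inclCLM hS) : WeakDual ℂ S) ∈ characterSpace ℂ S := by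
    intro S hS χ
    refine ⟨?_, ?_⟩
    · intro h0
      have h1 : χ (inclCLM hS (1 : S)) = 0 := DFunLike.congr_fun h0 (1 : S)
      have h2 : inclCLM hS (1 : S) = 1 := Subtype.ext rfl
      rw [h2, map_one] at h1
      exact one_ne_zero h1
    · intro x y
      show χ (inclCLM hS (x * y)) = χ (inclCLM hS x) * χ (inclCLM hS y)
      have h2 : inclCLM hS (x * y) = inclCLM hS x * inclCLM hS y := Subtype.ext rfl
      rw [h2, map_mul]
  set G : characterSpace ℂ D → characterSpace ℂ B × characterSpace ℂ C :=
    fun χ => (⟨_, memres B hBD χ⟩, ⟨_, memres C hCD χ⟩) with hGdef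
  have hGapp1 : ∀ (χ : characterSpace ℂ D) (b : B), (G χ).1 b = χ (jB b) := fun _ _ => rfl
  have hGapp2 : ∀ (χ : characterSpace ℂ D) (z : C), (G χ).2 z = χ (jC z) := fun _ _ => rfl
  have hGcont : Continuous G := by
    refine Continuous.prodMk ?_ ?_ <;>
      refine Continuous.subtype_mk ?_ _ <;>
      refine WeakDual.continuous_of_continuous_eval ?_ <;>
      intro y <;>
      [have hcc : Continuous fun χ : characterSpace ℂ D => (χ : WeakDual ℂ D) ((inclCLM hBD) y) :=
        (WeakDual.eval_continuous _).comp continuous_subtype_val;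
       have hcc : Continuous fun χ : characterSpace ℂ D => (χ : WeakDual ℂ D) ((inclCLM hCD) y) :=
        (WeakDual.eval_continuous _).comp continuous_subtype_val] <;>
      exact hcc
  -- key: a character on D is determined on the image of e by its restrictions
  have hval_on_e : ∀ (χ : characterSpace ℂ D) (z : (B ⊔ C : Subalgebra ℂ 𝔄))
      (N : ℕ) (b : Fin N → B) (cc : Fin N → C),
      (z : 𝔄) = ∑ i, (b i : 𝔄) * (cc i : 𝔄) →
      χ (e z) = ∑ i, χ (jB (b i)) * χ (jC (cc i)) := by
    intro χ z N b cc hz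
    have hez : e z = ∑ i, jB (b i) * jC (cc i) := by
      apply Subtype.ext
      push_cast
      exact hz
    rw [hez, map_sum]
    exact Finset.sum_congr rfl fun i _ => map_mul χ _ _
  have hinj : Function.Injective G := by
    intro χ₁ χ₂ h
    have hB' : ∀ b : B, χ₁ (jB b) = χ₂ (jB b) := by
      intro b
      have := DFunLike.congr_fun (congrArg Prod.fst h) b
      exact this
    have hC' : ∀ z : C, χ₁ (jC z) = χ₂ (jC z) := by
      intro z
      have := DFunLike.congr_fun (congrArg Prod.snd h) z
      exact this
    have hfun : ⇑χ₁ = ⇑χ₂ := by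
      refine hdense.equalizer (map_continuous χ₁) (map_continuous χ₂) (funext fun z => ?_)
      obtain ⟨N, b, cc, hz⟩ := repr_of_mem_sup' z.2
      show χ₁ (e z) = χ₂ (e z)
      rw [hval_on_e χ₁ z N b cc hz, hval_on_e χ₂ z N b cc hz]
      exact Finset.sum_congr rfl fun i _ => by rw [hB' (b i), hC' (cc i)]
    exact WeakDual.CharacterSpace.ext (congrFun hfun)
  have hsurj : Function.Surjective G := by
    rintro ⟨ξ, η⟩
    set K : ℝ := c * ‖CharacterSpace.toCLM η‖ with hKdef
    -- the fundamental estimate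
    have hkey : ∀ (N : ℕ) (b : Fin N → B) (cc : Fin N → C),
        ‖∑ i, ξ (b i) * η (cc i)‖ ≤ K * ‖∑ i, (b i : 𝔄) * (cc i : 𝔄)‖ := by
      intro N b cc
      have h1 : ∑ i, ξ (b i) * η (cc i) = η (∑ i, ξ (b i) • cc i) := by
        rw [map_sum]
        exact Finset.sum_congr rfl fun i _ => by rw [map_smul, smul_eq_mul]
      have h2 : ‖η (∑ i, ξ (b i) • cc i)‖
          ≤ ‖CharacterSpace.toCLM η‖ * ‖(∑ i, ξ (b i) • cc i : C)‖ :=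
        (CharacterSpace.toCLM η).le_opNorm _
      have hcoe : ((∑ i, ξ (b i) • cc i : C) : 𝔄) = ∑ i, ξ (b i) • ((cc i : 𝔄)) := by
        push_cast
        rfl
      have h3 : ‖(∑ i, ξ (b i) • cc i : C)‖ = ‖∑ i, ξ (b i) • ((cc i : 𝔄))‖ := by
        show ‖((∑ i, ξ (b i) • cc i : C) : 𝔄)‖ = _
        rw [hcoe]
      calc ‖∑ i, ξ (b i) * η (cc i)‖ = ‖η (∑ i, ξ (b i) • cc i)‖ := by rw [h1]
        _ ≤ ‖CharacterSpace.toCLM η‖ * ‖∑ i, ξ (b i) • ((cc i : 𝔄))‖ := by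
            rw [← h3]; exact h2
        _ ≤ ‖CharacterSpace.toCLM η‖ * (c * ‖∑ i, (b i : 𝔄) * (cc i : 𝔄)‖) := by
            exact mul_le_mul_of_nonneg_left (hcond ξ N b cc) (ContinuousLinearMap.opNorm_nonneg _)
        _ = K * ‖∑ i, (b i : 𝔄) * (cc i : 𝔄)‖ := by rw [hKdef]; ring
    -- well-defined value
    have hval : ∀ z : (B ⊔ C : Subalgebra ℂ 𝔄), ∃ v : ℂ,
        ∀ (N : ℕ) (b : Fin N → B) (cc : Fin N → C),
          (z : 𝔄) = ∑ i, (b i : 𝔄) * (cc i : 𝔄) → v = ∑ i, ξ (b i) * η (cc i) := by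
      intro z
      obtain ⟨N, b, cc, hz⟩ := repr_of_mem_sup' z.2
      refine ⟨∑ i, ξ (b i) * η (cc i), ?_⟩
      intro M b' cc' hz'
      have h0 : ∑ i : Fin (N + M),
          (((Fin.append b (fun j => -(b' j)) : Fin (N + M) → B) i : 𝔄))
            * (((Fin.append cc cc' : Fin (N + M) → C) i : 𝔄)) = 0 := by
        rw [Fin.sum_univ_add]
        simp only [Fin.append_left, Fin.append_right]
        push_cast
        rw [← hz]
        have : ∑ i : Fin M, (-(b' i : 𝔄)) * (cc' i : 𝔄)
            = -∑ i : Fin M, (b' i : 𝔄) * (cc' i : 𝔄) := by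
          rw [← Finset.sum_neg_distrib]
          exact Finset.sum_congr rfl fun i _ => by ring
        rw [this, ← hz']
        ring
      have hk := hkey (N + M) (Fin.append b fun j => -(b' j)) (Fin.append cc cc')
      rw [h0] at hk
      simp only [norm_zero, mul_zero] at hk
      have hsum : ∑ i : Fin (N + M),
          ξ ((Fin.append b (fun j => -(b' j)) : Fin (N + M) → B) i)
            * η ((Fin.append cc cc' : Fin (N + M) → C) i)
          = (∑ i, ξ (b i) * η (cc i)) - (∑ i, ξ (b' i) * η (cc' i)) := by
        rw [Fin.sum_univ_add]
        simp only [Fin.append_left, Fin.append_right, map_neg]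
        rw [sub_eq_add_neg, ← Finset.sum_neg_distrib]
        congr 1
        exact Finset.sum_congr rfl fun i _ => by ring
      rw [hsum] at hk
      have := norm_sub_eq_zero_iff.mp (le_antisymm hk (norm_nonneg _))
      rw [this]
    set f : (B ⊔ C : Subalgebra ℂ 𝔄) → ℂ := fun z => (hval z).choose with hfdef
    have hf : ∀ (z : (B ⊔ C : Subalgebra ℂ 𝔄)) (N : ℕ) (b : Fin N → B) (cc : Fin N → C),
        (z : 𝔄) = ∑ i, (b i : 𝔄) * (cc i : 𝔄) → f z = ∑ i, ξ (b i) * η (cc i) :=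
      fun z => (hval z).choose_spec
    -- algebraic properties of f
    have hf_one : f 1 = 1 := by
      rw [hf 1 1 (fun _ => 1) (fun _ => 1) (by simp)]
      simp
    have hf_add : ∀ z w, f (z + w) = f z + f w := by
      intro z w
      obtain ⟨N, b, cc, hz⟩ := repr_of_mem_sup' z.2
      obtain ⟨M, b', cc', hw⟩ := repr_of_mem_sup' w.2
      have hzw : ((z + w : (B ⊔ C : Subalgebra ℂ 𝔄)) : 𝔄)
          = ∑ i : Fin (N + M), (((Fin.append b b' : Fin (N + M) → B) i : 𝔄))
              * (((Fin.append cc cc' : Fin (N + M) → C) i : 𝔄)) := by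
        rw [Fin.sum_univ_add]
        simp only [Fin.append_left, Fin.append_right]
        push_cast
        rw [← hz, ← hw]
      rw [hf _ _ _ _ hzw, hf _ _ _ _ hz, hf _ _ _ _ hw, Fin.sum_univ_add]
      simp only [Fin.append_left, Fin.append_right]
    have hf_smul : ∀ (a : ℂ) z, f (a • z) = a * f z := by
      intro a z
      obtain ⟨N, b, cc, hz⟩ := repr_of_mem_sup' z.2
      have haz : ((a • z : (B ⊔ C : Subalgebra ℂ 𝔄)) : 𝔄)
          = ∑ i, (((a • b i : B)) : 𝔄) * ((cc i : 𝔄)) := by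
        push_cast
        rw [hz, Finset.smul_sum]
        exact Finset.sum_congr rfl fun i _ => (smul_mul_assoc a _ _).symm
      rw [hf _ _ _ _ haz, hf _ _ _ _ hz, Finset.mul_sum]
      exact Finset.sum_congr rfl fun i _ => by rw [map_smul, smul_eq_mul, mul_assoc]
    have hf_mul : ∀ z w, f (z * w) = f z * f w := by
      intro z w
      obtain ⟨N, b, cc, hz⟩ := repr_of_mem_sup' z.2
      obtain ⟨M, b', cc', hw⟩ := repr_of_mem_sup' w.2
      have hzw : ((z * w : (B ⊔ C : Subalgebra ℂ 𝔄)) : 𝔄)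
          = ∑ k : Fin (N * M),
              ((b (finProdFinEquiv.symm k).1 * b' (finProdFinEquiv.symm k).2 : B) : 𝔄)
              * ((cc (finProdFinEquiv.symm k).1 * cc' (finProdFinEquiv.symm k).2 : C) : 𝔄) := by
        rw [sum_fin_mul' (fun i j => ((b i * b' j : B) : 𝔄) * ((cc i * cc' j : C) : 𝔄))]
        push_cast
        rw [hz, hw, Finset.sum_mul_sum]
        refine Finset.sum_congr rfl fun i _ => Finset.sum_congr rfl fun j _ => by ring
      rw [hf _ _ _ _ hzw, hf _ _ _ _ hz, hf _ _ _ _ hw,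
        sum_fin_mul' (fun i j => ξ (b i * b' j) * η (cc i * cc' j)), Finset.sum_mul_sum]
      refine Finset.sum_congr rfl fun i _ => Finset.sum_congr rfl fun j _ => ?_
      rw [map_mul, map_mul]
      ring
    have hf_bound : ∀ z, ‖f z‖ ≤ K * ‖z‖ := by
      intro z
      obtain ⟨N, b, cc, hz⟩ := repr_of_mem_sup' z.2
      rw [hf _ _ _ _ hz]
      calc ‖∑ i, ξ (b i) * η (cc i)‖ ≤ K * ‖∑ i, (b i : 𝔄) * (cc i : 𝔄)‖ := hkey N b cc
        _ = K * ‖z‖ := by rw [← hz]; rfl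
    set fL : (B ⊔ C : Subalgebra ℂ 𝔄) →L[ℂ] ℂ :=
      LinearMap.mkContinuous
        { toFun := f
          map_add' := hf_add
          map_smul' := fun a z => by simpa using hf_smul a z } K hf_bound with hfLdef
    have hfL : ∀ z, fL z = f z := fun z => rfl
    set g : D →L[ℂ] ℂ :=
      fL.extend e with hgdef
    have hge : ∀ z, g (e z) = f z := fun z =>
      ContinuousLinearMap.extend_eq (f := fL) (e := e) hdense (inclCLM_isometry hsub).isUniformInducing z
    have hg1 : g 1 = 1 := by
      have h1 : (1 : D) = e 1 := Subtype.ext rfl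
      rw [h1, hge, hf_one]
    have hgm : ∀ x y : D, g (x * y) = g x * g y := by
      have hfun : (fun p : D × D => g (p.1 * p.2)) = fun p : D × D => g p.1 * g p.2 := by
        refine DenseRange.equalizer (hdense.prodMap hdense)
          (g.continuous.comp continuous_mul)
          ((g.continuous.comp continuous_fst).mul (g.continuous.comp continuous_snd))
          (funext fun p => ?_)
        obtain ⟨z, w⟩ := p
        show g (e z * e w) = g (e z) * g (e w)
        have h1 : e z * e w = e (z * w) := Subtype.ext rfl
        rw [h1, hge, hge, hge, hf_mul]
      intro x y
      exact congrFun hfun (x, y)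
    refine ⟨⟨g, ?_, ?_⟩, ?_⟩
    · intro h0
      have h1 : g 1 = 0 := DFunLike.congr_fun h0 (1 : D)
      rw [hg1] at h1
      exact one_ne_zero h1
    · exact hgm
    · -- G ⟨g, _⟩ = (ξ, η)
      have hgB : ∀ b : B, g (jB b) = ξ b := by
        intro b
        have h1 : jB b = e ⟨(b : 𝔄), le_sup_left (α := Subalgebra ℂ 𝔄) b.2⟩ :=
          Subtype.ext rfl
        rw [h1, hge]
        rw [hf _ 1 (fun _ => b) (fun _ => 1) (by simp)]
        simp
      have hgC : ∀ z : C, g (jC z) = η z := by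
        intro z
        have h1 : jC z = e ⟨(z : 𝔄), le_sup_right (α := Subalgebra ℂ 𝔄) z.2⟩ :=
          Subtype.ext rfl
        rw [h1, hge]
        rw [hf _ 1 (fun _ => 1) (fun _ => z) (by simp)]
        simp
      refine Prod.ext ?_ ?_
      · exact WeakDual.CharacterSpace.ext fun b => hgB b
      · exact WeakDual.CharacterSpace.ext fun z => hgC z
  haveI : CompactSpace (characterSpace ℂ D) := inferInstance
  let E : characterSpace ℂ D ≃ (characterSpace ℂ B × characterSpace ℂ C) :=
    Equiv.ofBijective G ⟨hinj, hsurj⟩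
  let H : characterSpace ℂ D ≃ₜ (characterSpace ℂ B × characterSpace ℂ C) :=
    Continuous.homeoOfEquivCompactToT2 (f := E) hGcont
  refine ⟨H.symm, ?_⟩
  intro ξ η b cc
  have hq : G (H.symm (ξ, η)) = (ξ, η) := H.apply_symm_apply (ξ, η)
  set χ : characterSpace ℂ D := H.symm (ξ, η) with hχdef
  have hq1 : ∀ b : B, χ (jB b) = ξ b := fun b => DFunLike.congr_fun (congrArg Prod.fst hq) b
  have hq2 : ∀ z : C, χ (jC z) = η z := fun z => DFunLike.congr_fun (congrArg Prod.snd hq) z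
  have hx : (⟨(b : 𝔄) * (cc : 𝔄),
      Subalgebra.le_topologicalClosure _
        (mul_mem (Algebra.mem_sup_left b.2) (Algebra.mem_sup_right cc.2))⟩ : D)
      = (jB b) * (jC cc) := Subtype.ext rfl
  rw [hx, map_mul, hq1, hq2]
end

section
/- Let X be a topological space and let C_b(X) denote the Banach algebra of bounded continuous complex-valued functions on X with the supremum norm. Then C(X) is projective free if and only if C_b(X) is projective free (equivalently, finitely generated projective modules over C(X) are free iff the same holds over C_b(X)). -/
set_option maxHeartbeats 1000000
set_option synthInstance.maxHeartbeats 400000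

namespace PF14
open Matrix

variable {R : Type} [CommRing R]

theorem toMatrix'_mulVecLin {n : ℕ} (m : Matrix (Fin n) (Fin n) R) :
    LinearMap.toMatrix' m.mulVecLin = m := by
  have : Matrix.toLin' m = m.mulVecLin := by
    refine LinearMap.ext fun v => ?_
    rw [Matrix.toLin'_apply, mulVecLin_apply]
  rw [← this, LinearMap.toMatrix'_toLin']

/-- From a pair (c,d) with d*c = 1, c*d = m, the range of m is free. -/
noncomputable def pairEquiv {n : ℕ} {ι : Type} [Fintype ι] [DecidableEq ι]
    {m : Matrix (Fin n) (Fin n) R} {c : Matrix (Fin n) ι R} {d : Matrix ι (Fin n) R}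
    (hdc : d * c = 1) (hcd : c * d = m) :
    (LinearMap.range m.mulVecLin) ≃ₗ[R] (ι → R) := by
  have hm : m * m = m := by
    rw [← hcd, Matrix.mul_assoc, ← Matrix.mul_assoc d c d, hdc, Matrix.one_mul]
  have hfix : ∀ v ∈ LinearMap.range m.mulVecLin, m.mulVec v = v := by
    rintro v ⟨u, rfl⟩
    simp only [mulVecLin_apply, Matrix.mulVec_mulVec, hm]
  have hmc : m * c = c := by rw [← hcd, Matrix.mul_assoc, hdc, Matrix.mul_one]
  exact
  { toFun := fun v => d.mulVec v.1
    map_add' := by intro v w; simp [Matrix.mulVec_add]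
    map_smul' := by intro r v; simp [Matrix.mulVec_smul]
    invFun := fun w => ⟨c.mulVec w, ⟨c.mulVec w, by
      simp only [mulVecLin_apply, Matrix.mulVec_mulVec, hmc]⟩⟩
    left_inv := by
      rintro ⟨v, hv⟩
      ext1
      simp only [Matrix.mulVec_mulVec, hcd]
      exact hfix v hv
    right_inv := by
      intro w
      simp only [Matrix.mulVec_mulVec, hdc, Matrix.one_mulVec] }

theorem free_pair {n : ℕ} {ι : Type} [Fintype ι] [DecidableEq ι]
    {m : Matrix (Fin n) (Fin n) R} (hm : m * m = m)
    (b : Module.Basis ι R (LinearMap.range m.mulVecLin)) :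
    ∃ (c : Matrix (Fin n) ι R) (d : Matrix ι (Fin n) R), d * c = 1 ∧ c * d = m := by
  have hfix : ∀ v ∈ LinearMap.range m.mulVecLin, m.mulVec v = v := by
    rintro v ⟨u, rfl⟩
    simp only [mulVecLin_apply, Matrix.mulVec_mulVec, hm]
  set ψ0 : (LinearMap.range m.mulVecLin) ≃ₗ[R] (ι → R) := b.equivFun
  set Φ : (ι → R) →ₗ[R] (Fin n → R) :=
    (LinearMap.range m.mulVecLin).subtype ∘ₗ (ψ0.symm : (ι → R) →ₗ[R] _)
  set Ψ : (Fin n → R) →ₗ[R] (ι → R) :=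
    (ψ0 : _ →ₗ[R] (ι → R)) ∘ₗ m.mulVecLin.rangeRestrict
  refine ⟨LinearMap.toMatrix' Φ, LinearMap.toMatrix' Ψ, ?_, ?_⟩
  · rw [← LinearMap.toMatrix'_comp, ← LinearMap.toMatrix'_id (R := R) (n := ι)]
    congr 1
    refine LinearMap.ext fun w => ?_
    have h1 : m.mulVecLin.rangeRestrict (Φ w) = ψ0.symm w := by
      ext1
      show m.mulVec ((ψ0.symm w : (Fin n → R))) = _
      exact hfix _ (ψ0.symm w).2
    simp only [LinearMap.comp_apply, Ψ, h1]
    simp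
  · rw [← LinearMap.toMatrix'_comp]
    have h2 : Φ ∘ₗ Ψ = m.mulVecLin := by
      refine LinearMap.ext fun u => ?_
      simp only [LinearMap.comp_apply, Φ, Ψ]
      simp only [LinearEquiv.coe_coe, LinearEquiv.symm_apply_apply]
      rfl
    rw [h2, toMatrix'_mulVecLin]



open Matrix
variable {R : Type} [CommRing R]

theorem range_finite {n : ℕ} (m : Matrix (Fin n) (Fin n) R) :
    Module.Finite R (LinearMap.range m.mulVecLin) :=
  Module.Finite.range _

theorem range_projective {n : ℕ} {m : Matrix (Fin n) (Fin n) R} (hm : m * m = m) :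
    Module.Projective R (LinearMap.range m.mulVecLin) := by
  have hfix : ∀ v ∈ LinearMap.range m.mulVecLin, m.mulVec v = v := by
    rintro v ⟨u, rfl⟩
    simp only [mulVecLin_apply, Matrix.mulVec_mulVec, hm]
  refine Module.Projective.of_split (LinearMap.range m.mulVecLin).subtype
    m.mulVecLin.rangeRestrict ?_
  refine LinearMap.ext fun v => ?_
  ext1
  exact hfix v.1 v.2

theorem exists_idem (M : Type) [AddCommGroup M] [Module R M]
    (hf : Module.Finite R M) (hp : Module.Projective R M) :
    ∃ (n : ℕ) (m : Matrix (Fin n) (Fin n) R), m * m = m ∧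
      Nonempty (M ≃ₗ[R] LinearMap.range m.mulVecLin) := by
  obtain ⟨n, f, hsurj⟩ := Module.Finite.exists_fin' R M
  obtain ⟨g, hg⟩ := Module.projective_lifting_property f LinearMap.id hsurj
  set e : (Fin n → R) →ₗ[R] (Fin n → R) := g ∘ₗ f
  have hee : e ∘ₗ e = e := by
    show (g ∘ₗ f) ∘ₗ (g ∘ₗ f) = g ∘ₗ f
    rw [LinearMap.comp_assoc, ← LinearMap.comp_assoc f g f, hg, LinearMap.id_comp]
  have hginj : Function.Injective g := by
    intro a b hab
    have := congrArg f hab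
    have h1 : f (g a) = a := congrFun (congrArg (fun h => h.toFun) hg) a
    have h2 : f (g b) = b := congrFun (congrArg (fun h => h.toFun) hg) b
    rwa [h1, h2] at this
  refine ⟨n, LinearMap.toMatrix' e, ?_, ?_⟩
  · rw [← LinearMap.toMatrix'_comp, hee]
  · have hrange : LinearMap.range (LinearMap.toMatrix' e).mulVecLin = LinearMap.range g := by
      have hme : (LinearMap.toMatrix' e).mulVecLin = e := by
        refine LinearMap.ext fun v => ?_
        rw [mulVecLin_apply, ← Matrix.toLin'_apply, Matrix.toLin'_toMatrix']
      rw [hme]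
      apply le_antisymm
      · rintro v ⟨u, rfl⟩; exact ⟨f u, rfl⟩
      · rintro v ⟨u, rfl⟩
        refine ⟨g u, ?_⟩
        show g (f (g u)) = g u
        congr 1
        exact congrFun (congrArg (fun h => h.toFun) hg) u
    rw [hrange]
    exact ⟨LinearEquiv.ofInjective g hginj⟩

theorem pair_sum {n : ℕ} {ι₁ ι₂ : Type} [Fintype ι₁] [Fintype ι₂] [DecidableEq ι₁] [DecidableEq ι₂]
    {m₁ m₂ : Matrix (Fin n) (Fin n) R}
    (h12 : m₁ * m₂ = 0) (h21 : m₂ * m₁ = 0)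
    {c₁ : Matrix (Fin n) ι₁ R} {d₁ : Matrix ι₁ (Fin n) R}
    {c₂ : Matrix (Fin n) ι₂ R} {d₂ : Matrix ι₂ (Fin n) R}
    (hdc₁ : d₁ * c₁ = 1) (hcd₁ : c₁ * d₁ = m₁)
    (hdc₂ : d₂ * c₂ = 1) (hcd₂ : c₂ * d₂ = m₂) :
    ∃ (c : Matrix (Fin n) (ι₁ ⊕ ι₂) R) (d : Matrix (ι₁ ⊕ ι₂) (Fin n) R),
      d * c = 1 ∧ c * d = m₁ + m₂ := by
  have hd₁m : d₁ * m₁ = d₁ := by rw [← hcd₁, ← Matrix.mul_assoc, hdc₁, Matrix.one_mul]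
  have hd₂m : d₂ * m₂ = d₂ := by rw [← hcd₂, ← Matrix.mul_assoc, hdc₂, Matrix.one_mul]
  have hmc₁ : m₁ * c₁ = c₁ := by rw [← hcd₁, Matrix.mul_assoc, hdc₁, Matrix.mul_one]
  have hmc₂ : m₂ * c₂ = c₂ := by rw [← hcd₂, Matrix.mul_assoc, hdc₂, Matrix.mul_one]
  have hd₁c₂ : d₁ * c₂ = 0 := by
    calc d₁ * c₂ = (d₁ * m₁) * (m₂ * c₂) := by rw [hd₁m, hmc₂]
    _ = d₁ * (m₁ * m₂) * c₂ := by rw [Matrix.mul_assoc, Matrix.mul_assoc, Matrix.mul_assoc]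
    _ = 0 := by rw [h12, Matrix.mul_zero, Matrix.zero_mul]
  have hd₂c₁ : d₂ * c₁ = 0 := by
    calc d₂ * c₁ = (d₂ * m₂) * (m₁ * c₁) := by rw [hd₂m, hmc₁]
    _ = d₂ * (m₂ * m₁) * c₁ := by rw [Matrix.mul_assoc, Matrix.mul_assoc, Matrix.mul_assoc]
    _ = 0 := by rw [h21, Matrix.mul_zero, Matrix.zero_mul]
  refine ⟨fromCols c₁ c₂, fromRows d₁ d₂, ?_, ?_⟩
  · rw [fromRows_mul_fromCols, hdc₁, hdc₂, hd₁c₂, hd₂c₁, ← Matrix.fromBlocks_one]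
  · rw [fromCols_mul_fromRows, hcd₁, hcd₂]

theorem pair_card [Nontrivial R] {n : ℕ} {ι₁ ι₂ : Type}
    [Fintype ι₁] [Fintype ι₂] [DecidableEq ι₁] [DecidableEq ι₂]
    {m : Matrix (Fin n) (Fin n) R}
    {c₁ : Matrix (Fin n) ι₁ R} {d₁ : Matrix ι₁ (Fin n) R}
    {c₂ : Matrix (Fin n) ι₂ R} {d₂ : Matrix ι₂ (Fin n) R}
    (hdc₁ : d₁ * c₁ = 1) (hcd₁ : c₁ * d₁ = m)
    (hdc₂ : d₂ * c₂ = 1) (hcd₂ : c₂ * d₂ = m) :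
    Fintype.card ι₁ = Fintype.card ι₂ := by
  have e1 := pairEquiv hdc₁ hcd₁
  have e2 := pairEquiv hdc₂ hcd₂
  have e3 : (ι₁ → R) ≃ₗ[R] (ι₂ → R) := e1.symm.trans e2
  have := e3.finrank_eq
  rwa [Module.finrank_pi, Module.finrank_pi] at this

theorem pair_map {S : Type} [CommRing S] (ρ : R →+* S)
    {n : ℕ} {ι : Type} [Fintype ι] [DecidableEq ι]
    {m : Matrix (Fin n) (Fin n) R}
    {c : Matrix (Fin n) ι R} {d : Matrix ι (Fin n) R}
    (hdc : d * c = 1) (hcd : c * d = m) :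
    (d.map ρ) * (c.map ρ) = 1 ∧ (c.map ρ) * (d.map ρ) = m.map ρ := by
  constructor
  · rw [← Matrix.map_mul, hdc, Matrix.map_one ρ ρ.map_zero ρ.map_one]
  · rw [← Matrix.map_mul, hcd]

theorem pair_reindex {n : ℕ} {ι ι' : Type} [Fintype ι] [Fintype ι'] [DecidableEq ι] [DecidableEq ι']
    (e : ι' ≃ ι) {m : Matrix (Fin n) (Fin n) R}
    {c : Matrix (Fin n) ι R} {d : Matrix ι (Fin n) R}
    (hdc : d * c = 1) (hcd : c * d = m) :
    ∃ (c' : Matrix (Fin n) ι' R) (d' : Matrix ι' (Fin n) R), d' * c' = 1 ∧ c' * d' = m := by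
  refine ⟨c.submatrix id ⇑e, d.submatrix ⇑e id, ?_, ?_⟩
  · have := Matrix.submatrix_mul_equiv d c ⇑e (Equiv.refl (Fin n)) ⇑e
    simp only [Equiv.coe_refl] at this
    rw [this, hdc, submatrix_one_equiv]
  · have := Matrix.submatrix_mul_equiv c d (id : Fin n → Fin n) e (id : Fin n → Fin n)
    rw [this, hcd, Matrix.submatrix_id_id]

theorem kaplansky_algebra {T : Type*} [Ring T] [StarRing T] (e u : T)
    (he : e * e = e)
    (hzu : (1 + (e - star e) * (star e - e)) * u = 1)
    (huz : u * (1 + (e - star e) * (star e - e)) = 1) :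
    (e * star e * u) * (e * star e * u) = e * star e * u ∧
    star (e * star e * u) = e * star e * u ∧
    (e * star e * u) * e = e ∧
    e * (e * star e * u) = e * star e * u := by
  set s : T := star e with hs
  set z : T := 1 + (e - s) * (s - e) with hzdef
  have hss : s * s = s := by rw [hs, ← StarMul.star_mul, he]
  have hz : z = 1 - e - s + e * s + s * e := by
    have h0 : z = 1 + (e * s - e * e - s * s + s * e) := by rw [hzdef]; noncomm_ring
    rw [h0, he, hss]; noncomm_ring
  have hez : e * z = e * s * e := by
    have h0 : e * (1 - e - s + e * s + s * e) =
        e - e * e - e * s + (e * e) * s + e * s * e := by noncomm_ring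
    rw [hz, h0, he]; noncomm_ring
  have hze : z * e = e * s * e := by
    have h0 : (1 - e - s + e * s + s * e) * e =
        e - e * e - s * e + e * s * e + s * (e * e) := by noncomm_ring
    rw [hz, h0, he]; noncomm_ring
  have hsz : s * z = s * e * s := by
    have h0 : s * (1 - e - s + e * s + s * e) =
        s - s * e - s * s + s * e * s + (s * s) * e := by noncomm_ring
    rw [hz, h0, hss]; noncomm_ring
  have hzs : z * s = s * e * s := by
    have h0 : (1 - e - s + e * s + s * e) * s =
        s - e * s - s * s + e * (s * s) + s * e * s := by noncomm_ring
    rw [hz, h0, hss]; noncomm_ring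
  have hue : u * e = e * u := by
    calc u * e = u * e * (z * u) := by rw [hzu, mul_one]
    _ = u * (e * z) * u := by noncomm_ring
    _ = u * (z * e) * u := by rw [hez, hze]
    _ = (u * z) * (e * u) := by noncomm_ring
    _ = e * u := by rw [huz, one_mul]
  have hus : u * s = s * u := by
    calc u * s = u * s * (z * u) := by rw [hzu, mul_one]
    _ = u * (s * z) * u := by noncomm_ring
    _ = u * (z * s) * u := by rw [hsz, hzs]
    _ = (u * z) * (s * u) := by noncomm_ring
    _ = s * u := by rw [huz, one_mul]
  have hstarz : star z = z := by
    rw [hzdef]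
    simp only [star_add, star_one, StarMul.star_mul, star_sub, star_star, hs]
  have hstaru : star u = u := by
    have h1 : star u * z = 1 := by
      rw [← hstarz, ← StarMul.star_mul]
      rw [hzdef] at hzu
      rw [hzdef, hzu, star_one]
    calc star u = star u * (z * u) := by rw [hzu, mul_one]
    _ = (star u * z) * u := by rw [mul_assoc]
    _ = u := by rw [h1, one_mul]
  have hpe : (e * s * u) * e = e := by
    calc (e * s * u) * e = e * s * (e * u) := by rw [mul_assoc, mul_assoc, hue, ← mul_assoc, ← mul_assoc]
    _ = (e * z) * u := by rw [hez]; noncomm_ring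
    _ = e * (z * u) := by rw [mul_assoc]
    _ = e := by rw [hzu, mul_one]
  refine ⟨?_, ?_, hpe, ?_⟩
  · calc (e * s * u) * (e * s * u) = ((e * s * u) * e) * (s * u) := by noncomm_ring
    _ = e * s * u := by rw [hpe, mul_assoc]
  · calc star (e * s * u) = star u * (star s * star e) := by rw [StarMul.star_mul, StarMul.star_mul]
    _ = u * (e * s) := by rw [hstaru, hs, star_star]
    _ = (u * e) * s := by rw [mul_assoc]
    _ = e * (u * s) := by rw [hue, mul_assoc]
    _ = e * s * u := by rw [hus, mul_assoc]
  · calc e * (e * s * u) = (e * e) * (s * u) := by noncomm_ring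
    _ = e * s * u := by rw [he, mul_assoc]
open Matrix BoundedContinuousFunction

variable {X : Type} [TopologicalSpace X]

/-- Evaluation ring hom on C(X, ℂ). -/
noncomputable def ev (x : X) : C(X, ℂ) →+* ℂ where
  toFun f := f x
  map_one' := rfl
  map_mul' _ _ := rfl
  map_zero' := rfl
  map_add' _ _ := rfl

theorem ev_star (x : X) (f : C(X, ℂ)) : ev x (star f) = star (ev x f) := rfl

/-- The inclusion of bounded continuous functions into continuous functions. -/
def iota : (X →ᵇ ℂ) →+* C(X, ℂ) where
  toFun f := f.toContinuousMap
  map_one' := by ext x; simp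
  map_mul' f g := by ext x; simp
  map_zero' := by ext x; simp
  map_add' f g := by ext x; simp

theorem iota_injective : Function.Injective (iota (X := X)) := by
  intro f g h
  ext x
  exact congrFun (congrArg (fun φ : C(X, ℂ) => ⇑φ) h) x

theorem iota_star (f : X →ᵇ ℂ) : iota (star f) = star (iota f) := by
  ext x; simp [iota]

/-- Entry bound for a self-adjoint idempotent complex matrix. -/
theorem entry_bound {n : ℕ} (P : Matrix (Fin n) (Fin n) ℂ) (h : Pᴴ * P = P) :
    ∀ i j, ‖P i j‖ ≤ 1 := by
  have hherm : Pᴴ = P := by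
    have h2 : (Pᴴ * P)ᴴ = Pᴴ := by rw [h]
    rw [Matrix.conjTranspose_mul, Matrix.conjTranspose_conjTranspose] at h2
    rw [← h2, h]
  have hPP : P * P = P := by
    calc P * P = Pᴴ * P := by rw [hherm]
    _ = P := h
  have hQ : (1 - P)ᴴ * (1 - P) = 1 - P := by
    rw [Matrix.conjTranspose_sub, Matrix.conjTranspose_one, hherm]
    rw [Matrix.sub_mul, Matrix.mul_sub, Matrix.mul_sub, hPP]
    simp only [Matrix.one_mul, Matrix.mul_one]
    abel
  have key : ∀ (Q : Matrix (Fin n) (Fin n) ℂ), Qᴴ * Q = Q → ∀ j,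
      Q j j = ((∑ k, Complex.normSq (Q k j) : ℝ) : ℂ) := by
    intro Q hQ' j
    have := congrFun (congrFun hQ' j) j
    rw [Matrix.mul_apply] at this
    rw [← this]
    push_cast
    refine Finset.sum_congr rfl fun k _ => ?_
    rw [Matrix.conjTranspose_apply]
    rw [Complex.star_def, Complex.normSq_eq_conj_mul_self]
  intro i j
  have h1 : P j j = ((∑ k, Complex.normSq (P k j) : ℝ) : ℂ) := key P h j
  have h2 : (1 - P) j j = ((∑ k, Complex.normSq ((1 - P) k j) : ℝ) : ℂ) := key _ hQ j
  have h3 : (1 - P) j j = 1 - P j j := by simp [Matrix.sub_apply, Matrix.one_apply]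
  have hsum_le : (∑ k, Complex.normSq (P k j)) ≤ 1 := by
    have : (1 : ℂ) - ((∑ k, Complex.normSq (P k j) : ℝ) : ℂ)
        = ((∑ k, Complex.normSq ((1 - P) k j) : ℝ) : ℂ) := by
      rw [← h1, ← h3, h2]
    have hre : 1 - (∑ k, Complex.normSq (P k j)) = ∑ k, Complex.normSq ((1 - P) k j) := by
      have := congrArg Complex.re this
      simpa using this
    nlinarith [Finset.sum_nonneg (fun k (_ : k ∈ Finset.univ) => Complex.normSq_nonneg ((1 - P) k j))]
  have habs2 : Complex.normSq (P i j) ≤ 1 := by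
    refine le_trans ?_ hsum_le
    refine Finset.single_le_sum (f := fun k => Complex.normSq (P k j)) ?_ (Finset.mem_univ i)
    intro k _
    exact Complex.normSq_nonneg _
  have := Complex.sq_norm (P i j)
  nlinarith [norm_nonneg (P i j)]



theorem mapMatrix_star {n : ℕ} (x : X) (m : Matrix (Fin n) (Fin n) C(X, ℂ)) :
    (ev x).mapMatrix (star m) = star ((ev x).mapMatrix m) := by
  rw [Matrix.star_eq_conjTranspose, Matrix.star_eq_conjTranspose,
    RingHom.mapMatrix_apply, RingHom.mapMatrix_apply]
  exact Matrix.conjTranspose_map (ev x) (fun a => rfl)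

open scoped ComplexOrder in
theorem kaplansky_matrix {n : ℕ} (m : Matrix (Fin n) (Fin n) C(X, ℂ)) (hm : m * m = m) :
    ∃ p : Matrix (Fin n) (Fin n) C(X, ℂ), p * p = p ∧ star p = p ∧ p * m = m ∧ m * p = p ∧
      ∀ i j x, ‖p i j x‖ ≤ 1 := by
  classical
  set z : Matrix (Fin n) (Fin n) C(X, ℂ) := 1 + (m - star m) * (star m - m) with hz
  have hdet : ∀ x : X, z.det x ≠ 0 := by
    intro x
    have hmap : (ev x) z.det = ((ev x).mapMatrix z).det := RingHom.map_det _ _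
    set E : Matrix (Fin n) (Fin n) ℂ := (ev x).mapMatrix m with hE
    have hzx : (ev x).mapMatrix z = 1 + (Eᴴ - E)ᴴ * (Eᴴ - E) := by
      rw [hz]
      rw [map_add, _root_.map_one, _root_.map_mul, map_sub, map_sub, mapMatrix_star]
      rw [Matrix.conjTranspose_sub, Matrix.conjTranspose_conjTranspose]
      rw [← Matrix.star_eq_conjTranspose]
    have hpos : ((ev x).mapMatrix z).PosDef := by
      rw [hzx]
      exact Matrix.PosDef.add_posSemidef Matrix.PosDef.one
        (Matrix.posSemidef_conjTranspose_mul_self _)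
    show (ev x) z.det ≠ 0
    rw [hmap]
    exact hpos.det_pos.ne'
  have hux : IsUnit z.det := by
    refine isUnit_iff_exists_inv.2 ⟨⟨fun x => (z.det x)⁻¹, z.det.continuous.inv₀ hdet⟩, ?_⟩
    ext x
    exact mul_inv_cancel₀ (hdet x)
  have hzunit : IsUnit z := (Matrix.isUnit_iff_isUnit_det z).2 hux
  set u : Matrix (Fin n) (Fin n) C(X, ℂ) := ↑hzunit.unit⁻¹ with hu
  have hzu : z * u = 1 := hzunit.mul_val_inv
  have huz : u * z = 1 := hzunit.val_inv_mul
  obtain ⟨h1, h2, h3, h4⟩ := kaplansky_algebra m u hm hzu huz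
  refine ⟨m * star m * u, h1, h2, h3, h4, ?_⟩
  intro i j x
  set p : Matrix (Fin n) (Fin n) C(X, ℂ) := m * star m * u with hp
  have hsp : ((ev x).mapMatrix p)ᴴ * ((ev x).mapMatrix p) = (ev x).mapMatrix p := by
    have hspp : star p * p = p := by rw [h2, h1]
    have := congrArg (ev x).mapMatrix hspp
    rw [_root_.map_mul, mapMatrix_star, Matrix.star_eq_conjTranspose] at this
    exact this
  have hb := entry_bound _ hsp i j
  exact hb


theorem iota_map_injective_rect {I J : Type} (a b : Matrix I J (X →ᵇ ℂ))
    (h : a.map ⇑(iota (X := X)) = b.map ⇑(iota (X := X))) : a = b := by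
  refine Matrix.ext fun i j => ?_
  exact iota_injective (congrFun (congrFun h i) j)

theorem iota_mapMatrix_injective {n : ℕ} :
    Function.Injective ((iota (X := X)).mapMatrix (m := Fin n)) := by
  intro a b h
  refine Matrix.ext fun i j => ?_
  exact iota_injective (congrFun (congrFun h i) j)

theorem descend_matrix {n : ℕ} (m : Matrix (Fin n) (Fin n) C(X, ℂ))
    (h : ∀ i j x, ‖m i j x‖ ≤ 1) :
    ∃ q : Matrix (Fin n) (Fin n) (X →ᵇ ℂ), iota.mapMatrix q = m := by
  refine ⟨Matrix.of fun i j => BoundedContinuousFunction.ofNormedAddCommGroup (m i j)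
    (m i j).continuous 1 (fun x => by simpa using h i j x), ?_⟩
  ext i j x
  rfl

theorem nontrivial_CX (x0 : X) : Nontrivial C(X, ℂ) := by
  refine ⟨⟨0, 1, fun h => ?_⟩⟩
  have := DFunLike.congr_fun h x0
  simpa using this

/-- The key induction: a projection over the bounded functions whose range over `C(X)` is
free of rank `k` witnesses freeness of rank `k` already over the bounded functions. -/
theorem bounded_pair (hA : IsProjectiveFree C(X, ℂ)) (x0 : X) :
    ∀ (k n : ℕ) (q : Matrix (Fin n) (Fin n) (X →ᵇ ℂ)), q * q = q → star q = q →
    ∀ (c : Matrix (Fin n) (Fin k) C(X, ℂ)) (d : Matrix (Fin k) (Fin n) C(X, ℂ)),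
      d * c = 1 → c * d = iota.mapMatrix q →
      ∃ (c' : Matrix (Fin n) (Fin k) (X →ᵇ ℂ)) (d' : Matrix (Fin k) (Fin n) (X →ᵇ ℂ)),
        d' * c' = 1 ∧ c' * d' = q := by
  haveI : Nontrivial C(X, ℂ) := nontrivial_CX x0
  intro k
  induction k with
  | zero =>
    intro n q hqq hqs c d hdc hcd
    have hcd0 : c * d = 0 := by
      ext i j
      rw [Matrix.mul_apply]
      simp
    have hq0 : q = 0 := by
      apply iota_mapMatrix_injective
      rw [← hcd, hcd0, map_zero]
    refine ⟨0, 0, Subsingleton.elim _ _, ?_⟩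
    rw [hq0, Matrix.mul_zero]
  | succ k ih =>
    intro n q hqq hqs c d hdc hcd
    set Qm : Matrix (Fin n) (Fin n) C(X, ℂ) := iota.mapMatrix q with hQm
    have hQc : Qm * c = c := by
      rw [← hcd, Matrix.mul_assoc, hdc, Matrix.mul_one]
    -- the first column of c
    set vA : Fin n → C(X, ℂ) := fun i => c i 0 with hvA
    have hnonzero : ∀ x : X, ∃ i, vA i x ≠ 0 := by
      intro x
      by_contra hcon
      push_neg at hcon
      have h00 := congrFun (congrFun hdc 0) 0
      rw [Matrix.mul_apply, Matrix.one_apply_eq] at h00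
      have := congrArg (ev x) h00
      rw [map_sum, _root_.map_one] at this
      have hz : ∀ i ∈ Finset.univ, (ev x) (d 0 i * c i 0) = 0 := by
        intro i _
        rw [_root_.map_mul]
        show (d 0 i x) * (c i 0 x) = 0
        rw [hcon i, mul_zero]
      rw [Finset.sum_eq_zero hz] at this
      exact zero_ne_one this
    -- the normalisation
    set Sf : X → ℝ := fun x => ∑ i, Complex.normSq (vA i x) with hSf
    have hScont : Continuous Sf := by
      apply continuous_finset_sum
      intro i _
      exact Complex.continuous_normSq.comp (vA i).continuous
    have hSpos : ∀ x, 0 < Sf x := by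
      intro x
      obtain ⟨i, hi⟩ := hnonzero x
      refine Finset.sum_pos' (fun j _ => Complex.normSq_nonneg _) ⟨i, Finset.mem_univ i, ?_⟩
      exact Complex.normSq_pos.2 hi
    set ν : X → ℝ := fun x => Real.sqrt (Sf x) with hν
    have hνcont : Continuous ν := Real.continuous_sqrt.comp hScont
    have hνpos : ∀ x, 0 < ν x := fun x => Real.sqrt_pos.2 (hSpos x)
    set νinv : C(X, ℂ) := ⟨fun x => (((ν x)⁻¹ : ℝ) : ℂ),
      Complex.continuous_ofReal.comp (hνcont.inv₀ (fun x => (hνpos x).ne'))⟩ with hνinv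
    have habsle : ∀ i x, ‖vA i x‖ ≤ ν x := by
      intro i x
      have h1 : Complex.normSq (vA i x) ≤ Sf x := by
        rw [hSf]
        exact Finset.single_le_sum (f := fun j => Complex.normSq (vA j x))
          (fun j _ => Complex.normSq_nonneg _) (Finset.mem_univ i)
      rw [hν, Complex.norm_def]
      exact Real.sqrt_le_sqrt h1
    have hbound : ∀ i x, ‖vA i x * νinv x‖ ≤ 1 := by
      intro i x
      have hx : νinv x = (((ν x)⁻¹ : ℝ) : ℂ) := rfl
      rw [hx, norm_mul, Complex.norm_real, Real.norm_eq_abs,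
        abs_of_pos (inv_pos.2 (hνpos x)), ← div_eq_mul_inv]
      exact (div_le_one (hνpos x)).2 (habsle i x)
    set w : Fin n → (X →ᵇ ℂ) := fun i => BoundedContinuousFunction.ofNormedAddCommGroup
      (fun x => vA i x * νinv x) ((vA i).continuous.mul νinv.continuous) 1 (hbound i) with hw
    have hsum : (∑ i, star (w i) * w i) = 1 := by
      ext x
      have hcoe : ((∑ i, star (w i) * w i : X →ᵇ ℂ)) x = ∑ i, star (w i x) * (w i x) := by
        rw [show ((∑ i, star (w i) * w i : X →ᵇ ℂ)) x
          = (⇑(∑ i, star (w i) * w i : X →ᵇ ℂ)) x from rfl]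
        rw [BoundedContinuousFunction.coe_sum]
        simp [Finset.sum_apply]
      rw [hcoe]
      have hwx : ∀ i, w i x = vA i x * (((ν x)⁻¹ : ℝ) : ℂ) := fun i => rfl
      have hterm : ∀ i, star (w i x) * (w i x)
          = ((Complex.normSq (vA i x) * ((ν x)⁻¹ * (ν x)⁻¹) : ℝ) : ℂ) := by
        intro i
        rw [Complex.star_def, ← Complex.normSq_eq_conj_mul_self, hwx i, _root_.map_mul,
          Complex.normSq_ofReal]
      rw [Finset.sum_congr rfl (fun i _ => hterm i)]
      have hone : (1 : X →ᵇ ℂ) x = 1 := rfl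
      rw [hone]
      have hν2 : (Sf x) * ((ν x)⁻¹ * (ν x)⁻¹) = 1 := by
        have hss : ν x * ν x = Sf x := Real.mul_self_sqrt (hSpos x).le
        field_simp [(hνpos x).ne']
        linarith [hss]
      calc ∑ i, ((Complex.normSq (vA i x) * ((ν x)⁻¹ * (ν x)⁻¹) : ℝ) : ℂ)
          = (((∑ i, Complex.normSq (vA i x)) * ((ν x)⁻¹ * (ν x)⁻¹) : ℝ) : ℂ) := by
            push_cast
            rw [Finset.sum_mul]
        _ = (((Sf x) * ((ν x)⁻¹ * (ν x)⁻¹) : ℝ) : ℂ) := by rw [hSf]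
        _ = 1 := by rw [hν2]; norm_num
    set cB : Matrix (Fin n) (Fin 1) (X →ᵇ ℂ) := Matrix.of (fun i _ => w i) with hcB
    set dB : Matrix (Fin 1) (Fin n) (X →ᵇ ℂ) := Matrix.of (fun _ j => star (w j)) with hdB
    have hdcB : dB * cB = 1 := by
      refine Matrix.ext fun i j => ?_
      have hi : i = 0 := Subsingleton.elim i 0
      have hj : j = 0 := Subsingleton.elim j 0
      subst hi; subst hj
      rw [Matrix.mul_apply, Matrix.one_apply_eq]
      rw [← hsum]
      rfl
    set q1 : Matrix (Fin n) (Fin n) (X →ᵇ ℂ) := cB * dB with hq1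
    have hq1s : star q1 = q1 := by
      rw [Matrix.star_eq_conjTranspose, hq1, Matrix.conjTranspose_mul]
      have h1 : dBᴴ = cB := by
        refine Matrix.ext fun i j => ?_
        rw [Matrix.conjTranspose_apply]
        show star (star (w i)) = w i
        rw [star_star]
      have h2 : cBᴴ = dB := by
        refine Matrix.ext fun i j => ?_
        rw [Matrix.conjTranspose_apply]
        rfl
      rw [h1, h2]
    have hqcB : q * cB = cB := by
      have key : (q * cB).map ⇑(iota (X := X)) = cB.map ⇑(iota (X := X)) := by
        rw [Matrix.map_mul]
        have hqmap : q.map ⇑(iota (X := X)) = Qm := rfl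
        rw [hqmap]
        refine Matrix.ext fun i j => ?_
        have hj : j = 0 := Subsingleton.elim j 0
        subst hj
        rw [Matrix.mul_apply]
        have hcmap : ∀ l, (cB.map ⇑(iota (X := X))) l 0 = vA l * νinv := by
          intro l
          ext x
          rfl
        have h0 := congrFun (congrFun hQc i) 0
        rw [Matrix.mul_apply] at h0
        calc ∑ l, Qm i l * (cB.map ⇑(iota (X := X))) l 0
            = ∑ l, (Qm i l * vA l) * νinv := by
              refine Finset.sum_congr rfl fun l _ => ?_
              rw [hcmap l, mul_assoc]
          _ = (∑ l, Qm i l * vA l) * νinv := by rw [Finset.sum_mul]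
          _ = vA i * νinv := by simp only [hvA]; rw [h0]
      exact iota_map_injective_rect _ _ key
    have hqq1 : q * q1 = q1 := by rw [hq1, ← Matrix.mul_assoc, hqcB]
    have hq1q : q1 * q = q1 := by
      have hst : star (q1 * q) = q1 := by
        rw [StarMul.star_mul, hqs, hq1s, hqq1]
      have := congrArg star hst
      rwa [star_star, hq1s] at this
    have hq1q1 : q1 * q1 = q1 := by
      rw [hq1, Matrix.mul_assoc, ← Matrix.mul_assoc dB cB dB, hdcB, Matrix.one_mul]
    set r : Matrix (Fin n) (Fin n) (X →ᵇ ℂ) := q - q1 with hr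
    have hrr : r * r = r := by
      rw [hr, Matrix.sub_mul, Matrix.mul_sub, Matrix.mul_sub, hqq, hqq1, hq1q, hq1q1]
      abel
    have hrs : star r = r := by rw [hr, star_sub, hqs, hq1s]
    have hq1r : q1 * r = 0 := by rw [hr, Matrix.mul_sub, hq1q, hq1q1, sub_self]
    have hrq1 : r * q1 = 0 := by rw [hr, Matrix.sub_mul, hqq1, hq1q1, sub_self]
    have hq1addr : q1 + r = q := by rw [hr]; abel
    -- the range of r over C(X, ℂ) is free by hypothesis
    set Rm : Matrix (Fin n) (Fin n) C(X, ℂ) := iota.mapMatrix r with hRm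
    have hRR : Rm * Rm = Rm := by rw [hRm, ← _root_.map_mul, hrr]
    haveI hfin := range_finite Rm
    haveI hproj := range_projective hRR
    haveI hfree := hA (LinearMap.range Rm.mulVecLin) hfin hproj
    set N : ℕ := Fintype.card (Module.Free.ChooseBasisIndex C(X, ℂ)
      (LinearMap.range Rm.mulVecLin)) with hN
    let b : Module.Basis (Fin N) C(X, ℂ) (LinearMap.range Rm.mulVecLin) :=
      (Module.Free.chooseBasis C(X, ℂ) (LinearMap.range Rm.mulVecLin)).reindex
        (Fintype.equivFin _)
    obtain ⟨c₂, d₂, hdc₂, hcd₂⟩ := free_pair hRR b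
    -- pair over C(X, ℂ) for q1
    obtain ⟨hdc₁A, hcd₁A⟩ := pair_map iota hdcB hq1.symm
    -- combine on the C(X, ℂ) side to count ranks
    have horthA1 : (q1.map ⇑(iota (X := X))) * Rm = 0 := by
      rw [hRm, RingHom.mapMatrix_apply, ← Matrix.map_mul, hq1r, Matrix.map_zero _ iota.map_zero]
    have horthA2 : Rm * (q1.map ⇑(iota (X := X))) = 0 := by
      rw [hRm, RingHom.mapMatrix_apply, ← Matrix.map_mul, hrq1, Matrix.map_zero _ iota.map_zero]
    have hq1A' : (cB.map ⇑(iota (X := X))) * (dB.map ⇑(iota (X := X))) = q1.map ⇑(iota (X := X)) :=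
      hcd₁A
    have hdc₁A' : (dB.map ⇑(iota (X := X))) * (cB.map ⇑(iota (X := X))) = 1 := hdc₁A
    obtain ⟨cc, dd, hccdd1, hccdd2⟩ := pair_sum horthA1 horthA2 hdc₁A' hq1A' hdc₂ hcd₂
    have hccdd2' : cc * dd = iota.mapMatrix q := by
      rw [hccdd2, hRm]
      refine Matrix.ext fun i j => ?_
      show iota (q1 i j) + iota (r i j) = iota (q i j)
      rw [← _root_.map_add]
      congr 1
      exact congrFun (congrFun hq1addr i) j
    have hcard : Fintype.card (Fin 1 ⊕ Fin N) = Fintype.card (Fin (k + 1)) :=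
      pair_card hccdd1 hccdd2' hdc (hcd.trans hQm)
    have hNk : k = N := by
      rw [Fintype.card_sum, Fintype.card_fin, Fintype.card_fin, Fintype.card_fin] at hcard
      omega
    obtain ⟨c₂', d₂', hdc₂', hcd₂'⟩ := pair_reindex (finCongr hNk) hdc₂ hcd₂
    -- apply the induction hypothesis to r
    obtain ⟨cB₂, dB₂, hBdc₂, hBcd₂⟩ := ih n r hrr hrs c₂' d₂' hdc₂' (hcd₂'.trans hRm)
    -- combine over the bounded functions
    obtain ⟨cF, dF, hF1, hF2⟩ := pair_sum hq1r hrq1 hdcB hq1.symm hBdc₂ hBcd₂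
    have e : Fin (k + 1) ≃ (Fin 1 ⊕ Fin N) := (finCongr (by omega)).trans finSumFinEquiv.symm
    have e' : Fin (k + 1) ≃ (Fin 1 ⊕ Fin k) :=
      (finCongr (by omega : k + 1 = 1 + k)).trans finSumFinEquiv.symm
    obtain ⟨c', d', h5, h6⟩ := pair_reindex e' hF1 hF2
    exact ⟨c', d', h5, by rw [h6, hq1addr]⟩


theorem iota_mapMatrix_star {n : ℕ} (q : Matrix (Fin n) (Fin n) (X →ᵇ ℂ)) :
    iota.mapMatrix (star q) = star ((iota (X := X)).mapMatrix q) := by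
  rw [Matrix.star_eq_conjTranspose, Matrix.star_eq_conjTranspose,
    RingHom.mapMatrix_apply, RingHom.mapMatrix_apply]
  exact Matrix.conjTranspose_map ⇑iota (fun a => iota_star a)

theorem range_eq {R : Type} [CommRing R] {n : ℕ} {m p : Matrix (Fin n) (Fin n) R}
    (h1 : p * m = m) (h2 : m * p = p) :
    LinearMap.range m.mulVecLin = LinearMap.range p.mulVecLin := by
  apply le_antisymm
  · rintro v ⟨w, rfl⟩
    refine ⟨m.mulVec w, ?_⟩
    simp only [Matrix.mulVecLin_apply, Matrix.mulVec_mulVec, h1]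
  · rintro v ⟨w, rfl⟩
    refine ⟨p.mulVec w, ?_⟩
    simp only [Matrix.mulVecLin_apply, Matrix.mulVec_mulVec, h2]

/-- If `C_b(X)` is projective free, so is `C(X)`. -/
theorem dir_BA (hB : IsProjectiveFree (X →ᵇ ℂ)) : IsProjectiveFree C(X, ℂ) := by
  intro M _ _ hfin hproj
  obtain ⟨n, m, hm, ⟨eM⟩⟩ := exists_idem M hfin hproj
  obtain ⟨p, hp1, hp2, hp3, hp4, hp5⟩ := kaplansky_matrix m hm
  obtain ⟨q, hq⟩ := descend_matrix p hp5
  have hq2 : q * q = q := by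
    apply iota_mapMatrix_injective
    rw [_root_.map_mul, hq, hp1]
  haveI hfinq := range_finite q
  haveI hprojq := range_projective hq2
  haveI hfreeB := hB (LinearMap.range q.mulVecLin) hfinq hprojq
  let b : Module.Basis (Fin (Fintype.card (Module.Free.ChooseBasisIndex (X →ᵇ ℂ)
      (LinearMap.range q.mulVecLin)))) (X →ᵇ ℂ) (LinearMap.range q.mulVecLin) :=
    (Module.Free.chooseBasis (X →ᵇ ℂ) (LinearMap.range q.mulVecLin)).reindex
      (Fintype.equivFin _)
  obtain ⟨c, d, hdc, hcd⟩ := free_pair hq2 b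
  obtain ⟨hdcA, hcdA⟩ := pair_map iota hdc hcd
  have hqp : q.map ⇑(iota (X := X)) = p := hq
  have hcdA' : (c.map ⇑(iota (X := X))) * (d.map ⇑(iota (X := X))) = p := by
    rw [hcdA, hqp]
  have equiv := pairEquiv hdcA hcdA'
  have hranges : LinearMap.range m.mulVecLin = LinearMap.range p.mulVecLin :=
    range_eq hp3 hp4
  exact Module.Free.of_equiv (eM.trans ((LinearEquiv.ofEq _ _ hranges).trans equiv)).symm

/-- If `C(X)` is projective free and `X` is nonempty, then `C_b(X)` is projective free. -/
theorem dir_AB (hA : IsProjectiveFree C(X, ℂ)) (x0 : X) :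
    IsProjectiveFree (X →ᵇ ℂ) := by
  intro P _ _ hfin hproj
  obtain ⟨n, e, he, ⟨eP⟩⟩ := exists_idem P hfin hproj
  set E : Matrix (Fin n) (Fin n) C(X, ℂ) := iota.mapMatrix e with hEdef
  have hE : E * E = E := by rw [hEdef, ← _root_.map_mul, he]
  obtain ⟨p, hp1, hp2, hp3, hp4, hp5⟩ := kaplansky_matrix E hE
  obtain ⟨q, hq⟩ := descend_matrix p hp5
  have hqq : q * q = q := by
    apply iota_mapMatrix_injective
    rw [_root_.map_mul, hq, hp1]
  have hqs : star q = q := by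
    apply iota_mapMatrix_injective
    rw [iota_mapMatrix_star, hq, hp2]
  have hqe : q * e = e := by
    apply iota_mapMatrix_injective
    rw [_root_.map_mul, hq, ← hEdef, hp3]
  have heq : e * q = q := by
    apply iota_mapMatrix_injective
    rw [_root_.map_mul, hq, ← hEdef, hp4]
  have hranges : LinearMap.range e.mulVecLin = LinearMap.range q.mulVecLin :=
    range_eq hqe heq
  haveI hfinp := range_finite p
  haveI hprojp := range_projective hp1
  haveI hfreeA := hA (LinearMap.range p.mulVecLin) hfinp hprojp
  let b : Module.Basis (Fin (Fintype.card (Module.Free.ChooseBasisIndex C(X, ℂ)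
      (LinearMap.range p.mulVecLin)))) C(X, ℂ) (LinearMap.range p.mulVecLin) :=
    (Module.Free.chooseBasis C(X, ℂ) (LinearMap.range p.mulVecLin)).reindex
      (Fintype.equivFin _)
  obtain ⟨c, d, hdc, hcd⟩ := free_pair hp1 b
  obtain ⟨c', d', hdc', hcd'⟩ := bounded_pair hA x0 _ n q hqq hqs c d hdc (hcd.trans hq.symm)
  have equiv := pairEquiv hdc' hcd'
  exact Module.Free.of_equiv
    (eP.trans ((LinearEquiv.ofEq _ _ hranges).trans equiv)).symm

theorem trivial_pf (R : Type) [CommRing R] (hR : Subsingleton R) : IsProjectiveFree R := by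
  intro M _ _ _ _
  haveI := Module.subsingleton R M
  exact Module.Free.of_subsingleton' R M

end PF14

/-- The algebra `C(X)` of continuous complex-valued functions on a topological
space `X` is projective free iff the algebra `C_b(X)` of bounded continuous
complex-valued functions is projective free. -/
theorem stmt14 (X : Type) [TopologicalSpace X] :
    IsProjectiveFree C(X, ℂ) ↔ IsProjectiveFree (BoundedContinuousFunction X ℂ) := by
  by_cases hX : Nonempty X
  · obtain ⟨x0⟩ := hX
    exact ⟨fun hA => PF14.dir_AB hA x0, fun hB => PF14.dir_BA hB⟩
  · haveI : IsEmpty X := not_nonempty_iff.mp hX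
    have h1 : Subsingleton C(X, ℂ) := ⟨fun f g => ContinuousMap.ext fun x => isEmptyElim x⟩
    have h2 : Subsingleton (BoundedContinuousFunction X ℂ) :=
      ⟨fun f g => BoundedContinuousFunction.ext fun x => isEmptyElim x⟩
    exact ⟨fun _ => PF14.trivial_pf _ h2, fun _ => PF14.trivial_pf _ h1⟩
end
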